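/- arXiv:2506.05738 — 8 statements merged into one kernel-verified Lean document; each statement's English description precedes it below -/
import Mathlib

section
/- Let n = 2m, d = s(2^m − 1) with gcd(s, 2^m + 1) = t and (2^m + 1)/t > 3, and let f(x) = x^d over F_{2^n}. Then the number of x ∈ F_{2^n} with (x+1)^d + x^d = 0 equals t(2^m − 1) − 1. -/
theorem stmt_3 (m n s t d : ℕ) (hm : 0 < m) (hn : n = 2 * m) (hs : 0 < s)
    (ht : t = Nat.gcd s (2 ^ m + 1)) (hbig : (2 ^ m + 1) / t > 3)
    (hd : d = s * (2 ^ m - 1))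
    (F : Type) [Field F] [Fintype F] [DecidableEq F] (hF : Fintype.card F = 2 ^ n) :
    (Finset.univ.filter fun x : F => (x + 1) ^ d + x ^ d = 0).card = t * (2 ^ m - 1) - 1 := by
  -- basic numeric facts
  have hq1 : 2 ≤ 2 ^ m := by
    calc 2 = 2 ^ 1 := (pow_one 2).symm
    _ ≤ 2 ^ m := Nat.pow_le_pow_right (by norm_num) hm
  have hdpos : 0 < d := by
    subst hd; exact Nat.mul_pos hs (by omega)
  -- characteristic 2
  have hp2 : ringChar F = 2 := by
    obtain ⟨k, hk, hcard⟩ := FiniteField.card F (ringChar F)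
    rw [hF] at hcard
    have hdvd : ringChar F ∣ 2 ^ n := by
      rw [hcard]; exact dvd_pow_self _ k.pos.ne'
    have h2 := hk.dvd_of_dvd_pow hdvd
    exact (Nat.prime_dvd_prime_iff_eq hk Nat.prime_two).mp h2
  haveI hC2 : CharP F 2 := by rw [← hp2]; exact ringChar.charP F
  have hself : ∀ a : F, a + a = 0 := CharTwo.add_self_eq_zero
  have haddzero : ∀ a b : F, a + b = 0 ↔ a = b := by
    intro a b
    constructor
    · intro h
      have := congrArg (· + b) h
      simpa [add_assoc, hself b] using this
    · rintro rfl; exact hself a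
  -- the unit group
  set N : ℕ := 2 ^ (2 * m) - 1 with hN
  have hcardU : Fintype.card Fˣ = N := by
    rw [Fintype.card_units, hF, hn]
  have hfac : N = (2 ^ m - 1) * (2 ^ m + 1) := by
    have h2 : 2 ^ (2 * m) = 2 ^ m * 2 ^ m := by rw [two_mul, pow_add]
    obtain ⟨k, hk⟩ : ∃ k, 2 ^ m = k + 1 := ⟨2 ^ m - 1, by omega⟩
    rw [hN, h2, hk]
    simp only [Nat.add_sub_cancel]
    symm
    exact Nat.eq_sub_of_add_eq (by ring)
  set d0 : ℕ := Nat.gcd d N with hd0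
  have hd0val : d0 = (2 ^ m - 1) * t := by
    rw [hd0, hd, hfac, mul_comm s, Nat.gcd_mul_left, ht]
  have htpos : 0 < t := by
    rw [ht]; exact Nat.gcd_pos_of_pos_left _ hs
  have h21 : 0 < 2 ^ m - 1 := Nat.sub_pos_of_lt (lt_of_lt_of_le one_lt_two hq1)
  have hd0pos : 0 < d0 := hd0val ▸ Nat.mul_pos h21 htpos
  have hNpos : 0 < N := by
    rw [hfac]; exact Nat.mul_pos h21 (Nat.succ_pos _)
  have hd0dvdN : d0 ∣ N := Nat.gcd_dvd_right _ _
  have hd0dvdd : d0 ∣ d := Nat.gcd_dvd_left _ _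
  -- key equivalence : y ^ d = 1 ↔ y ^ d0 = 1
  have hiff : ∀ y : F, y ^ d = 1 ↔ y ^ d0 = 1 := by
    intro y
    constructor
    · intro hy
      have hy0 : y ≠ 0 := by
        intro h; rw [h, zero_pow hdpos.ne'] at hy; exact zero_ne_one hy
      set u : Fˣ := Units.mk0 y hy0 with hu
      have hud : u ^ d = 1 := by
        ext; push_cast [hu]; exact hy
      have hud0 : u ^ d0 = 1 := by
        rw [hd0, ← hcardU]; exact pow_gcd_eq_one.mpr ⟨hud, pow_card_eq_one⟩
      have := congrArg (Units.val) hud0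
      push_cast [hu] at this
      exact this
    · intro hy
      obtain ⟨k, hk⟩ := hd0dvdd
      rw [hk, pow_mul, hy, one_pow]
  -- primitive root of order d0 exists
  obtain ⟨g, hg⟩ := IsCyclic.exists_generator (α := Fˣ)
  have horderg : orderOf g = N := by
    rw [orderOf_eq_card_of_forall_mem_zpowers hg, Nat.card_eq_fintype_card, hcardU]
  obtain ⟨e, he⟩ : ∃ e : Fˣ, orderOf e = d0 := by
    refine ⟨g ^ (N / d0), ?_⟩
    rw [orderOf_pow, horderg, Nat.gcd_eq_right (Nat.div_dvd_of_dvd hd0dvdN),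
      Nat.div_div_self hd0dvdN hNpos.ne']
  have hprim : IsPrimitiveRoot ((e : Fˣ) : F) d0 := by
    rw [IsPrimitiveRoot.coe_units_iff, ← he]
    exact IsPrimitiveRoot.orderOf _
  have hroots : (Finset.univ.filter fun y : F => y ^ d = 1).card = d0 := by
    have : (Finset.univ.filter fun y : F => y ^ d = 1) =
        Polynomial.nthRootsFinset d0 (1 : F) := by
      ext y
      simp [Polynomial.mem_nthRootsFinset hd0pos, hiff y]
    rw [this, hprim.card_nthRootsFinset]
  -- the target set with 1 removed
  have hT : (Finset.univ.filter fun y : F => y ^ d = 1 ∧ y ≠ 1).card = d0 - 1 := by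
    have he : (Finset.univ.filter fun y : F => y ^ d = 1 ∧ y ≠ 1) =
        (Finset.univ.filter fun y : F => y ^ d = 1).erase 1 := by
      ext y
      simp [Finset.mem_erase, and_comm]
    rw [he, Finset.card_erase_of_mem (by simp), hroots]
  -- bijection between solutions and { y | y ^ d = 1, y ≠ 1 }
  have hbij : (Finset.univ.filter fun x : F => (x + 1) ^ d + x ^ d = 0).card =
      (Finset.univ.filter fun y : F => y ^ d = 1 ∧ y ≠ 1).card := by
    refine Finset.card_bij' (fun x _ => (x + 1) * x⁻¹) (fun y _ => (y + 1)⁻¹)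
      ?hi ?hj ?left ?right
    case hi =>
      intro x hx
      rw [Finset.mem_filter] at hx
      have hxd : (x + 1) ^ d = x ^ d := (haddzero _ _).mp hx.2
      have hx0 : x ≠ 0 := by
        rintro rfl
        rw [zero_add, one_pow, zero_pow hdpos.ne'] at hxd
        exact one_ne_zero hxd
      have hx1 : x + 1 ≠ 0 := by
        intro h
        rw [h, zero_pow hdpos.ne'] at hxd
        exact hx0 (pow_eq_zero_iff hdpos.ne' |>.mp hxd.symm)
      rw [Finset.mem_filter]
      refine ⟨Finset.mem_univ _, ?_, ?_⟩
      · rw [mul_pow, hxd, inv_pow, mul_inv_cancel₀ (pow_ne_zero _ hx0)]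
      · intro h
        have hx' : x + 1 = x := by
          have h2 := congrArg (· * x) h
          simpa [mul_assoc, inv_mul_cancel₀ hx0] using h2
        have h10 : (1 : F) = 0 := by linear_combination hx'
        exact one_ne_zero h10
    case hj =>
      intro y hy
      rw [Finset.mem_filter] at hy
      obtain ⟨-, hyd, hy1⟩ := hy
      have hy0 : y ≠ 0 := by
        intro h; rw [h, zero_pow hdpos.ne'] at hyd; exact zero_ne_one hyd
      have hy1' : y + 1 ≠ 0 := by
        intro h
        exact hy1 ((haddzero y 1).mp h)
      rw [Finset.mem_filter]
      refine ⟨Finset.mem_univ _, ?_⟩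
      have hyy : (y + 1) + 1 = y := by rw [add_assoc, hself, add_zero]
      have hxp1 : (y + 1)⁻¹ + 1 = y * (y + 1)⁻¹ := by
        have h2 : y * (y + 1)⁻¹ = ((y + 1) + 1) * (y + 1)⁻¹ := by rw [hyy]
        rw [h2, add_mul, mul_inv_cancel₀ hy1', one_mul, add_comm]
      rw [hxp1, mul_pow, hyd, one_mul, haddzero]
    case left =>
      intro x hx
      show ((x + 1) * x⁻¹ + 1)⁻¹ = x
      rw [Finset.mem_filter] at hx
      have hxd : (x + 1) ^ d = x ^ d := (haddzero _ _).mp hx.2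
      have hx0 : x ≠ 0 := by
        rintro rfl
        rw [zero_add, one_pow, zero_pow hdpos.ne'] at hxd
        exact one_ne_zero hxd
      have h1 : (x + 1) * x⁻¹ + 1 = x⁻¹ := by
        have h := mul_inv_cancel₀ hx0
        linear_combination h + hself 1
      rw [h1, inv_inv]
    case right =>
      intro y hy
      show ((y + 1)⁻¹ + 1) * ((y + 1)⁻¹)⁻¹ = y
      rw [Finset.mem_filter] at hy
      obtain ⟨-, hyd, hy1⟩ := hy
      have hy1' : y + 1 ≠ 0 := by
        intro h
        exact hy1 ((haddzero y 1).mp h)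
      have hyy : (y + 1) + 1 = y := by rw [add_assoc, hself, add_zero]
      have hxp1 : (y + 1)⁻¹ + 1 = y * (y + 1)⁻¹ := by
        have h2 : y * (y + 1)⁻¹ = ((y + 1) + 1) * (y + 1)⁻¹ := by rw [hyy]
        rw [h2, add_mul, mul_inv_cancel₀ hy1', one_mul, add_comm]
      rw [hxp1, inv_inv, mul_assoc, inv_mul_cancel₀ hy1', mul_one]
  rw [hbij, hT, hd0val, mul_comm]
end

section
/- Let n = 2m, d = s(2^m − 1) with gcd(s, 2^m + 1) = t, (2^m + 1)/t > 3, and suppose 3t does not divide 2^m + 1. Then the equation (x+1)^d + x^d = 1 over F_{2^n} has exactly 2 solutions, namely x = 0 and x = 1. -/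
theorem stmt_4 (m n s t d : ℕ) (hm : 0 < m) (hn : n = 2 * m) (hs : 0 < s)
    (ht : t = Nat.gcd s (2 ^ m + 1)) (hbig : (2 ^ m + 1) / t > 3)
    (h3t : ¬ (3 * t ∣ 2 ^ m + 1))
    (hd : d = s * (2 ^ m - 1))
    (F : Type) [Field F] [Fintype F] [DecidableEq F] (hF : Fintype.card F = 2 ^ n) :
    (Finset.univ.filter fun x : F => (x + 1) ^ d + x ^ d = 1) = {(0 : F), 1} ∧
    (Finset.univ.filter fun x : F => (x + 1) ^ d + x ^ d = 1).card = 2 := by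
  subst hn hd
  set q : ℕ := 2 ^ m with hq
  have hq1 : 1 ≤ q := Nat.one_le_two_pow
  have hq2 : 2 ≤ q := by
    have : 2 ^ 1 ≤ 2 ^ m := Nat.pow_le_pow_right (by norm_num) hm
    simpa using this
  have hcard : Fintype.card F = q * q := by
    rw [hF, two_mul, pow_add]
  -- characteristic 2
  haveI hp : CharP F (ringChar F) := ringChar.charP F
  obtain ⟨k0, hk0p, hk0⟩ := FiniteField.card F (ringChar F)
  have hchar : ringChar F = 2 := by
    have hdvd : ringChar F ∣ 2 ^ (2 * m) := by
      rw [← hF, hk0]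
      exact dvd_pow_self _ (by exact_mod_cast k0.ne_zero)
    have h2 := hk0p.dvd_of_dvd_pow hdvd
    exact (Nat.prime_dvd_prime_iff_eq hk0p Nat.prime_two).mp h2
  haveI hchar2 : CharP F 2 := hchar ▸ hp
  have htwo : (2 : F) = 0 := CharP.cast_eq_zero F 2
  -- gcd facts
  have htpos : 0 < t := ht ▸ Nat.gcd_pos_of_pos_left _ hs
  obtain ⟨s', hs'⟩ : t ∣ s := ht ▸ Nat.gcd_dvd_left _ _
  obtain ⟨k, hk⟩ : t ∣ q + 1 := ht ▸ Nat.gcd_dvd_right _ _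
  have hmul : (q - 1) * (q + 1) = q * q - 1 := by
    zify [hq1, show 1 ≤ q * q from Nat.one_le_iff_ne_zero.mpr (by positivity)]
    ring
  have hd0 : s * (q - 1) ≠ 0 := by
    have : 1 ≤ q - 1 := by omega
    positivity
  -- power lemmas
  have powA : ∀ y : F, y ≠ 0 → (y ^ (s * (q - 1))) ^ (q + 1) = 1 := by
    intro y hy
    rw [← pow_mul]
    have harith : s * (q - 1) * (q + 1) = (Fintype.card F - 1) * s := by
      rw [hcard, mul_assoc, hmul, mul_comm]
    rw [harith, pow_mul, FiniteField.pow_card_sub_one_eq_one y hy, one_pow]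
  have powB : ∀ y : F, y ≠ 0 → (y ^ (s * (q - 1))) ^ k = 1 := by
    intro y hy
    rw [← pow_mul]
    have harith : s * (q - 1) * k = (Fintype.card F - 1) * s' := by
      rw [hcard, ← hmul, hk, hs']
      generalize q - 1 = e
      ring
    rw [harith, pow_mul, FiniteField.pow_card_sub_one_eq_one y hy, one_pow]
  -- no solutions outside {0,1}
  have main : ∀ x : F, (x + 1) ^ (s * (q - 1)) + x ^ (s * (q - 1)) = 1 → x = 0 ∨ x = 1 := by
    intro x hx
    by_contra hcon
    push_neg at hcon
    obtain ⟨hx0, hx1⟩ := hcon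
    have hx1' : x + 1 ≠ 0 := by
      intro h
      apply hx1
      linear_combination h - htwo
    set a : F := x ^ (s * (q - 1)) with ha
    set b : F := (x + 1) ^ (s * (q - 1)) with hbdef
    have ha0 : a ≠ 0 := pow_ne_zero _ hx0
    have hb0 : b ≠ 0 := pow_ne_zero _ hx1'
    have haq : a ^ (q + 1) = 1 := powA x hx0
    have hbq : b ^ (q + 1) = 1 := powA (x + 1) hx1'
    have hb : b = a + 1 := by linear_combination hx - a * htwo
    have hfrob : b ^ q = a ^ q + 1 := by
      rw [hb]
      have := add_pow_char_pow a (1 : F) 2 m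
      simpa using this
    have hainv : a ^ q = a⁻¹ := by
      have h1 : a ^ q * a = 1 := by rw [← pow_succ, haq]
      exact eq_inv_of_mul_eq_one_left h1
    have hbinv : b ^ q = b⁻¹ := by
      have h1 : b ^ q * b = 1 := by rw [← pow_succ, hbq]
      exact eq_inv_of_mul_eq_one_left h1
    have hinv : b⁻¹ = a⁻¹ + 1 := by rw [← hbinv, hfrob, hainv]
    have e2 : (a + 1) * (a⁻¹ + 1) = 1 := by
      rw [← hb, ← hinv]
      exact mul_inv_cancel₀ hb0
    have hinva : a⁻¹ * a = 1 := inv_mul_cancel₀ ha0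
    have e3 : (a + 1) * (1 + a) = a := by
      linear_combination a * e2 - (a + 1) * hinva
    have ha2 : a ^ 2 = a + 1 := by
      linear_combination e3 - (a + 1) * htwo
    have ha3 : a ^ 3 = 1 := by
      linear_combination (a + 1) * ha2 + a * htwo
    have hane1 : a ≠ 1 := by
      intro h
      rw [h] at ha2
      have : (1 : F) = 0 := by linear_combination -ha2
      exact one_ne_zero this
    haveI : Fact (Nat.Prime 3) := ⟨by norm_num⟩
    have horder : orderOf a = 3 := orderOf_eq_prime ha3 hane1
    have hak : a ^ k = 1 := powB x hx0
    have h3k : 3 ∣ k := horder ▸ orderOf_dvd_of_pow_eq_one hak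
    obtain ⟨j, hj⟩ := h3k
    exact h3t ⟨j, by rw [hk, hj]; ring⟩
  have hset : (Finset.univ.filter fun x : F => (x + 1) ^ (s * (q - 1)) + x ^ (s * (q - 1)) = 1)
      = {(0 : F), 1} := by
    ext x
    simp only [Finset.mem_filter, Finset.mem_univ, true_and, Finset.mem_insert,
      Finset.mem_singleton]
    constructor
    · exact main x
    · rintro (rfl | rfl)
      · rw [zero_pow hd0, zero_add, one_pow, add_zero]
      · have h110 : (1 : F) + 1 = 0 := by linear_combination htwo
        rw [h110, zero_pow hd0, one_pow, zero_add]
  refine ⟨hset, ?_⟩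
  rw [hset]
  exact Finset.card_pair zero_ne_one
end

section
/- Let n = 2m, d = s(2^m − 1) with gcd(s, 2^m + 1) = t, (2^m + 1)/t > 3, and suppose 3t divides 2^m + 1. Then the equation (x+1)^d + x^d = 1 over F_{2^n} has exactly 2t^2 + 2 solutions. -/
open Finset Polynomial

lemma aux_char2 (F : Type) [Field F] [Fintype F] (n : ℕ) (hn : 0 < n)
    (hF : Fintype.card F = 2 ^ n) : CharP F 2 := by
  obtain ⟨p, hp⟩ := CharP.exists F
  haveI := hp
  obtain ⟨k, hpp, hck⟩ := FiniteField.card F p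
  have h2n : (2 : ℕ) ^ n = p ^ (k : ℕ) := by rw [← hF, hck]
  have hp2 : p = 2 := by
    have h1 : (2 : ℕ) ∣ p ^ (k : ℕ) := by
      rw [← h2n]; exact dvd_pow_self 2 hn.ne'
    have h2 : (2 : ℕ) ∣ p := Nat.Prime.dvd_of_dvd_pow Nat.prime_two h1
    exact ((Nat.prime_dvd_prime_iff_eq Nat.prime_two hpp).mp h2).symm
  rwa [hp2] at hp

lemma aux_key (F : Type) [Field F] (q : ℕ)
    (hfrob : ∀ a b : F, (a + b) ^ q = a ^ q + b ^ q)
    (u v : F) (hu : u ^ (q + 1) = 1) (hv : v ^ (q + 1) = 1) (huv : u + v ≠ 0) :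
    ((u + 1) / (u + v)) ^ q = v * ((u + 1) / (u + v)) := by
  have hu0 : u ≠ 0 := by
    intro h; rw [h, zero_pow (Nat.succ_ne_zero q)] at hu; exact one_ne_zero hu.symm
  have hv0 : v ≠ 0 := by
    intro h; rw [h, zero_pow (Nat.succ_ne_zero q)] at hv; exact one_ne_zero hv.symm
  have hUq : u ^ q = u⁻¹ := eq_inv_of_mul_eq_one_left (by rw [← pow_succ]; exact hu)
  have hVq : v ^ q = v⁻¹ := eq_inv_of_mul_eq_one_left (by rw [← pow_succ]; exact hv)
  have hiv : u⁻¹ + v⁻¹ ≠ 0 := by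
    intro h
    apply huv
    have h2 : u * v * (u⁻¹ + v⁻¹) = v + u := by field_simp
    rw [h, mul_zero] at h2
    rw [add_comm]; exact h2.symm
  rw [div_pow, hfrob u 1, one_pow, hfrob u v, hUq, hVq, ← mul_div_assoc,
    div_eq_div_iff hiv huv]
  field_simp
  ring

lemma aux_count (F : Type) [Field F] [Fintype F] [DecidableEq F] (q t s : ℕ)
    (ht0 : 0 < t) (hts : t ∣ s) (htq : t ∣ q + 1) (htg : Nat.gcd s (q + 1) = t)
    (ζt : F) (hζt : orderOf ζt = t)
    (c : F) (hc0 : c ≠ 0) (hcq : c ^ (q + 1) = 1) :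
    (Finset.univ.filter fun u : F => u ^ (q + 1) = 1 ∧ u ^ s = c ^ s).card = t := by
  have hcs0 : c ^ s ≠ 0 := pow_ne_zero _ hc0
  have himg : (Finset.univ.filter fun u : F => u ^ (q + 1) = 1 ∧ u ^ s = c ^ s)
      = (Polynomial.nthRootsFinset t (1 : F)).image (c * ·) := by
    ext u
    simp only [Finset.mem_filter, Finset.mem_univ, true_and, Finset.mem_image]
    constructor
    · rintro ⟨h1, h2⟩
      refine ⟨u / c, ?_, by field_simp⟩
      rw [Polynomial.mem_nthRootsFinset ht0]
      have e1 : (u / c) ^ (q + 1) = 1 := by rw [div_pow, h1, hcq, div_one]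
      have e2 : (u / c) ^ s = 1 := by rw [div_pow, h2, div_self hcs0]
      have hdvd : orderOf (u / c) ∣ t := by
        rw [← htg]
        exact Nat.dvd_gcd (orderOf_dvd_of_pow_eq_one e2) (orderOf_dvd_of_pow_eq_one e1)
      exact orderOf_dvd_iff_pow_eq_one.mp hdvd
    · rintro ⟨z, hz, rfl⟩
      rw [Polynomial.mem_nthRootsFinset ht0] at hz
      obtain ⟨e1, he1⟩ := htq
      obtain ⟨e2, he2⟩ := hts
      constructor
      · rw [mul_pow, hcq, he1, pow_mul, hz, one_pow, mul_one]
      · rw [mul_pow, he2, pow_mul, pow_mul, hz, one_pow, mul_one]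
  rw [himg, Finset.card_image_of_injective _ (mul_right_injective₀ hc0)]
  have hprim : IsPrimitiveRoot ζt t := hζt ▸ IsPrimitiveRoot.orderOf ζt
  exact hprim.card_nthRootsFinset

theorem stmt_5 (m n s t d : ℕ) (hm : 0 < m) (hn : n = 2 * m) (hs : 0 < s)
    (ht : t = Nat.gcd s (2 ^ m + 1)) (hbig : (2 ^ m + 1) / t > 3)
    (h3t : 3 * t ∣ 2 ^ m + 1)
    (hd : d = s * (2 ^ m - 1))
    (F : Type) [Field F] [Fintype F] [DecidableEq F] (hF : Fintype.card F = 2 ^ n) :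
    (Finset.univ.filter fun x : F => (x + 1) ^ d + x ^ d = 1).card = 2 * t ^ 2 + 2 := by
  classical
  set q : ℕ := 2 ^ m with hqdef
  have hq2 : 2 ≤ q := by
    calc 2 = 2 ^ 1 := (pow_one 2).symm
    _ ≤ 2 ^ m := Nat.pow_le_pow_right (by norm_num) hm
  have ht0 : 0 < t := ht ▸ Nat.gcd_pos_of_pos_left _ hs
  have hts : t ∣ s := ht ▸ Nat.gcd_dvd_left s (q + 1)
  have htq : t ∣ q + 1 := ht ▸ Nat.gcd_dvd_right s (q + 1)
  have htg : Nat.gcd s (q + 1) = t := ht.symm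
  have h3q : (3 : ℕ) ∣ q + 1 := dvd_trans (dvd_mul_right 3 t) h3t
  have hd0 : d ≠ 0 := by
    rw [hd]; exact Nat.mul_ne_zero hs.ne' (by omega)
  have hn0 : 0 < n := by omega
  have hcard : Fintype.card F = q ^ 2 := by rw [hF, hn, mul_comm 2 m, pow_mul]
  haveI hchar := aux_char2 F n hn0 hF
  haveI : Fact (Nat.Prime 2) := ⟨Nat.prime_two⟩
  have h20 : (1 : F) + 1 = 0 := by
    have h := CharP.cast_eq_zero F 2
    push_cast at h
    linear_combination h
  have hfrob : ∀ a b : F, (a + b) ^ q = a ^ q + b ^ q := fun a b => by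
    rw [hqdef]; exact add_pow_char_pow a b 2 m
  have hcc : ∀ a b : F, a + b = 0 → a = b := by
    intro a b h; linear_combination h - b * h20
  have hne0 : ∀ a : F, a ^ (q + 1) = 1 → a ≠ 0 := by
    intro a h ha; rw [ha, zero_pow (Nat.succ_ne_zero q)] at h; exact one_ne_zero h.symm
  -- roots of unity setup
  have hfact : q ^ 2 - 1 = (q + 1) * (q - 1) := by
    have h := Nat.sq_sub_sq q 1
    simpa using h
  have hq1N : (q + 1) ∣ q ^ 2 - 1 := ⟨q - 1, hfact⟩
  have h3tN : 3 * t ∣ q ^ 2 - 1 := h3t.trans hq1N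
  have hcardU : Fintype.card Fˣ = q ^ 2 - 1 := by rw [Fintype.card_units, hcard]
  obtain ⟨g, hg⟩ := IsCyclic.exists_generator (α := Fˣ)
  have hog : orderOf g = q ^ 2 - 1 := by
    rw [orderOf_eq_card_of_forall_mem_zpowers hg, Nat.card_eq_fintype_card, hcardU]
  have hN0 : q ^ 2 - 1 ≠ 0 := by
    have : 4 ≤ q ^ 2 := by nlinarith
    omega
  set ζ : Fˣ := g ^ ((q ^ 2 - 1) / (3 * t)) with hζdef
  have hoζ : orderOf ζ = 3 * t := by
    rw [hζdef, ← hog]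
    exact orderOf_pow_orderOf_div (by rw [hog]; exact hN0) (by rw [hog]; exact h3tN)
  have hoω' : orderOf (ζ ^ t) = 3 := by
    rw [orderOf_pow_of_dvd ht0.ne' (by rw [hoζ]; exact dvd_mul_left t 3), hoζ,
      Nat.mul_div_cancel 3 ht0]
  set ω : F := ((ζ ^ t : Fˣ) : F) with hωdef
  have hωo : orderOf ω = 3 := by rw [hωdef, orderOf_units]; exact hoω'
  have hω3 : ω ^ 3 = 1 := by rw [← hωo]; exact pow_orderOf_eq_one ω
  have hω0 : ω ≠ 0 := Units.ne_zero _
  have hω1 : ω ≠ 1 := by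
    intro h; rw [h, orderOf_one] at hωo; norm_num at hωo
  have hωeq : ω ^ 2 + ω + 1 = 0 := by
    have hf : (ω - 1) * (ω ^ 2 + ω + 1) = 0 := by
      have h : (ω - 1) * (ω ^ 2 + ω + 1) = ω ^ 3 - 1 := by ring
      rw [h, hω3, sub_self]
    rcases mul_eq_zero.mp hf with h | h
    · exact absurd (by linear_combination h) hω1
    · exact h
  have hωsum : ω + ω ^ 2 = 1 := by linear_combination hωeq - h20
  have hω2ne : ω ^ 2 ≠ ω := by
    intro h
    apply hω1
    have h2 : ω * ω = ω * 1 := by rw [mul_one]; linear_combination h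
    exact mul_left_cancel₀ hω0 h2
  have hω2ne1 : ω ^ 2 ≠ 1 := by
    intro h
    have h2 : orderOf ω ∣ 2 := orderOf_dvd_of_pow_eq_one h
    rw [hωo] at h2; norm_num at h2
  -- existence of a0 with a0^s = ω
  have hgcd1 : Nat.gcd (s / t) 3 = 1 := by
    have e1 : Nat.gcd s (3 * t) = t := by
      apply Nat.dvd_antisymm
      · have hh : Nat.gcd s (3 * t) ∣ Nat.gcd s (q + 1) :=
          Nat.dvd_gcd (Nat.gcd_dvd_left _ _) ((Nat.gcd_dvd_right s (3 * t)).trans h3t)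
        rwa [htg] at hh
      · exact Nat.dvd_gcd hts (dvd_mul_left t 3)
    have e2 : s = t * (s / t) := (Nat.mul_div_cancel' hts).symm
    rw [e2, mul_comm 3 t, Nat.gcd_mul_left] at e1
    exact Nat.eq_of_mul_eq_mul_left ht0 (e1.trans (mul_one t).symm)
  obtain ⟨k, -, hk⟩ := Nat.exists_mul_mod_eq_one_of_coprime hgcd1 (by norm_num)
  have hks : k * s ≡ t [MOD 3 * t] := by
    have h1 : (s / t) * k ≡ 1 [MOD 3] := by
      show (s / t) * k % 3 = 1 % 3
      rw [hk]
    have h2 := Nat.ModEq.mul_left' (c := t) h1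
    have e2 : s = t * (s / t) := (Nat.mul_div_cancel' hts).symm
    have e3 : k * s = t * ((s / t) * k) := by
      conv_lhs => rw [e2]
      ring
    calc k * s = t * ((s / t) * k) := e3
    _ ≡ t * 1 [MOD 3 * t] := by rw [mul_comm 3 t]; exact h2
    _ = t := mul_one t
  have hζq1 : ζ ^ (q + 1) = (1 : Fˣ) := orderOf_dvd_iff_pow_eq_one.mp (hoζ ▸ h3t)
  set a0 : F := ((ζ ^ k : Fˣ) : F) with ha0def
  have ha00 : a0 ≠ 0 := Units.ne_zero _
  have ha0s : a0 ^ s = ω := by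
    rw [ha0def, hωdef]
    norm_cast
    rw [← pow_mul]
    exact pow_eq_pow_iff_modEq.mpr (by rw [hoζ]; exact hks)
  have ha0q : a0 ^ (q + 1) = 1 := by
    have hh : (ζ ^ k) ^ (q + 1) = (1 : Fˣ) := by
      rw [← pow_mul, mul_comm, pow_mul, hζq1, one_pow]
    rw [ha0def, ← Units.val_pow_eq_pow_val, hh, Units.val_one]
  have hζto : orderOf ((ζ ^ 3 : Fˣ) : F) = t := by
    rw [orderOf_units, orderOf_pow_of_dvd (by norm_num) (by rw [hoζ]; exact dvd_mul_right 3 t),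
      hoζ, Nat.mul_div_cancel_left t (by norm_num)]
  -- the sets
  set A : Finset F := Finset.univ.filter fun u : F => u ^ (q + 1) = 1 ∧ u ^ s = ω with hAdef
  set B : Finset F := Finset.univ.filter fun u : F => u ^ (q + 1) = 1 ∧ u ^ s = ω ^ 2 with hBdef
  have hAcard : A.card = t := by
    rw [hAdef]
    have h := aux_count F q t s ht0 hts htq htg _ hζto a0 ha00 ha0q
    rwa [ha0s] at h
  have hb0s : (a0 ^ 2) ^ s = ω ^ 2 := by rw [← pow_mul, mul_comm, pow_mul, ha0s]
  have hb0q : (a0 ^ 2) ^ (q + 1) = 1 := by rw [← pow_mul, mul_comm, pow_mul, ha0q, one_pow]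
  have hBcard : B.card = t := by
    rw [hBdef]
    have h := aux_count F q t s ht0 hts htq htg _ hζto (a0 ^ 2) (pow_ne_zero 2 ha00) hb0q
    rwa [hb0s] at h
  set P : Finset (F × F) := A ×ˢ B ∪ B ×ˢ A with hPdef
  have hPprop : ∀ p : F × F, p ∈ P →
      p.1 ^ (q + 1) = 1 ∧ p.2 ^ (q + 1) = 1 ∧ p.1 ^ s + p.2 ^ s = 1 := by
    intro p hp
    rw [hPdef, Finset.mem_union, Finset.mem_product, Finset.mem_product, hAdef, hBdef] at hp
    simp only [Finset.mem_filter, Finset.mem_univ, true_and] at hp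
    rcases hp with ⟨⟨h1, h2⟩, ⟨h3, h4⟩⟩ | ⟨⟨h1, h2⟩, ⟨h3, h4⟩⟩
    · exact ⟨h1, h3, by rw [h2, h4]; exact hωsum⟩
    · exact ⟨h1, h3, by rw [h2, h4, add_comm]; exact hωsum⟩
  have hPne : ∀ p : F × F, p ∈ P → p.1 + p.2 ≠ 0 := by
    intro p hp h0
    obtain ⟨h1, h2, h3⟩ := hPprop p hp
    rw [hcc _ _ h0] at h3
    have h4 : p.2 ^ s + p.2 ^ s = 0 := by linear_combination (p.2 ^ s) * h20
    rw [h4] at h3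
    exact zero_ne_one h3
  have hxfacts : ∀ p : F × F, p ∈ P →
      ((p.1 + 1) / (p.1 + p.2)) ^ q = p.2 * ((p.1 + 1) / (p.1 + p.2)) ∧
      ((p.1 + 1) / (p.1 + p.2) + 1) ^ q = p.1 * ((p.1 + 1) / (p.1 + p.2) + 1) ∧
      (p.1 + 1) / (p.1 + p.2) ≠ 0 ∧ (p.1 + 1) / (p.1 + p.2) ≠ 1 := by
    intro p hp
    obtain ⟨h1, h2, h3⟩ := hPprop p hp
    have huv := hPne p hp
    set x : F := (p.1 + 1) / (p.1 + p.2) with hxdef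
    have hx1 : x * (p.1 + p.2) = p.1 + 1 := div_mul_cancel₀ _ huv
    have hu1 : p.1 ≠ 1 := by
      intro h
      rw [h, one_pow] at h3
      have h5 : p.2 ^ s = 0 := by linear_combination h3
      exact hne0 p.2 h2 ((pow_eq_zero_iff hs.ne').mp h5)
    have hv1 : p.2 ≠ 1 := by
      intro h
      rw [h, one_pow] at h3
      have h5 : p.1 ^ s = 0 := by linear_combination h3
      exact hne0 p.1 h1 ((pow_eq_zero_iff hs.ne').mp h5)
    refine ⟨aux_key F q hfrob p.1 p.2 h1 h2 huv, ?_, ?_, ?_⟩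
    · have hx2 : x + 1 = (p.2 + 1) / (p.2 + p.1) := by
        rw [eq_div_iff (by rw [add_comm]; exact huv)]
        linear_combination hx1 + p.1 * h20
      rw [hx2]
      exact aux_key F q hfrob p.2 p.1 h2 h1 (by rw [add_comm]; exact huv)
    · intro h
      rw [h, zero_mul] at hx1
      exact hu1 (hcc _ _ hx1.symm)
    · intro h
      rw [h, one_mul] at hx1
      exact hv1 (add_left_cancel hx1)
  have hinj : Set.InjOn (fun p : F × F => (p.1 + 1) / (p.1 + p.2)) ↑P := by
    intro p hp p' hp' heq
    simp only at heq
    obtain ⟨e1, e2, e3, e4⟩ := hxfacts p (Finset.mem_coe.mp hp)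
    obtain ⟨f1, f2, f3, f4⟩ := hxfacts p' (Finset.mem_coe.mp hp')
    rw [heq] at e1 e2 e3 e4
    have hv : p.2 = p'.2 := mul_right_cancel₀ f3 (e1.symm.trans f1)
    have hx1ne : (p'.1 + 1) / (p'.1 + p'.2) + 1 ≠ 0 := fun h => f4 (hcc _ _ h)
    have hu : p.1 = p'.1 := mul_right_cancel₀ hx1ne (e2.symm.trans f2)
    exact Prod.ext hu hv
  have hmain : (Finset.univ.filter fun x : F => (x + 1) ^ d + x ^ d = 1)
      = insert (0 : F) (insert 1 (P.image fun p : F × F => (p.1 + 1) / (p.1 + p.2))) := by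
    ext x
    simp only [Finset.mem_filter, Finset.mem_univ, true_and, Finset.mem_insert,
      Finset.mem_image]
    constructor
    · intro hx
      by_cases hx0 : x = 0
      · exact Or.inl hx0
      by_cases hx1 : x = 1
      · exact Or.inr (Or.inl hx1)
      refine Or.inr (Or.inr ?_)
      have hxne1 : x + 1 ≠ 0 := fun h => hx1 (hcc _ _ h)
      set u : F := (x + 1) ^ (q - 1) with hu
      set v : F := x ^ (q - 1) with hv
      have hq1q : (q - 1) * (q + 1) = q ^ 2 - 1 := by rw [mul_comm]; exact hfact.symm
      have huq : u ^ (q + 1) = 1 := by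
        rw [hu, ← pow_mul, hq1q, ← hcard]
        exact FiniteField.pow_card_sub_one_eq_one _ hxne1
      have hvq : v ^ (q + 1) = 1 := by
        rw [hv, ← pow_mul, hq1q, ← hcard]
        exact FiniteField.pow_card_sub_one_eq_one _ hx0
      have husv : u ^ s + v ^ s = 1 := by
        rw [hu, hv, ← pow_mul, ← pow_mul, mul_comm (q - 1) s, ← hd]
        exact hx
      have haq : (u ^ s) ^ (q + 1) = 1 := by rw [← pow_mul, mul_comm, pow_mul, huq, one_pow]
      have hbq : (v ^ s) ^ (q + 1) = 1 := by rw [← pow_mul, mul_comm, pow_mul, hvq, one_pow]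
      have hab : v ^ s = u ^ s + 1 := by linear_combination husv - (u ^ s) * h20
      have hr1 : (u ^ s) ^ q * u ^ s = 1 := by rw [← pow_succ]; exact haq
      have hr2 : ((u ^ s) ^ q + 1) * (u ^ s + 1) = 1 := by
        have h : (u ^ s + 1) ^ (q + 1) = 1 := by rw [← hab]; exact hbq
        rw [pow_succ, hfrob (u ^ s) 1, one_pow] at h
        exact h
      have hA1 : (u ^ s) ^ q + u ^ s = -1 := by linear_combination hr2 - hr1
      have haeq : (u ^ s) ^ 2 + u ^ s + 1 = 0 := by
        linear_combination (u ^ s) * hA1 - hr1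
      have hfac : (u ^ s - ω) * (u ^ s - ω ^ 2) = 0 := by
        linear_combination haeq - (u ^ s) * h20 - (u ^ s) * hωsum + hω3
      -- x = (u+1)/(u+v)
      have huv0 : u + v ≠ 0 := by
        intro h
        rw [hcc _ _ h] at husv
        have h4 : v ^ s + v ^ s = 0 := by linear_combination (v ^ s) * h20
        rw [h4] at husv
        exact zero_ne_one husv
      have e : q - 1 + 1 = q := by omega
      have hvx : v * x = x ^ q := by
        rw [hv, ← pow_succ, e]
      have hux : u * (x + 1) = (x + 1) ^ q := by
        rw [hu, ← pow_succ, e]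
      have hfx : (x + 1) ^ q = x ^ q + 1 := by rw [hfrob x 1, one_pow]
      have hux' : u * x + u = x ^ q + 1 := by linear_combination hux + hfx
      have hxeq : (u + 1) / (u + v) = x := by
        rw [div_eq_iff huv0]
        linear_combination (-1 : F) * hux' - hvx + (u - x ^ q) * h20
      rcases mul_eq_zero.mp hfac with hcase | hcase
      · have ha : u ^ s = ω := by linear_combination hcase
        have hb : v ^ s = ω ^ 2 := by
          rw [hab, ha]; linear_combination hωsum + (1 - ω ^ 2) * h20
        refine ⟨(u, v), ?_, hxeq⟩
        rw [hPdef, Finset.mem_union]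
        left
        rw [Finset.mem_product, hAdef, hBdef]
        simp only [Finset.mem_filter, Finset.mem_univ, true_and]
        exact ⟨⟨huq, ha⟩, ⟨hvq, hb⟩⟩
      · have ha : u ^ s = ω ^ 2 := by linear_combination hcase
        have hb : v ^ s = ω := by
          rw [hab, ha]; linear_combination hωeq - ω * h20
        refine ⟨(u, v), ?_, hxeq⟩
        rw [hPdef, Finset.mem_union]
        right
        rw [Finset.mem_product, hAdef, hBdef]
        simp only [Finset.mem_filter, Finset.mem_univ, true_and]
        exact ⟨⟨huq, ha⟩, ⟨hvq, hb⟩⟩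
    · rintro (rfl | rfl | ⟨p, hp, rfl⟩)
      · rw [zero_add, one_pow, zero_pow hd0, add_zero]
      · rw [one_pow, h20, zero_pow hd0, zero_add]
      · obtain ⟨e1, e2, e3, e4⟩ := hxfacts p hp
        set x : F := (p.1 + 1) / (p.1 + p.2) with hxdef
        have e : q - 1 + 1 = q := by omega
        have hx1ne : x + 1 ≠ 0 := fun h => e4 (hcc _ _ h)
        have hxq1 : x ^ (q - 1) = p.2 := by
          apply mul_right_cancel₀ e3
          rw [← pow_succ, e]
          exact e1
        have hxq2 : (x + 1) ^ (q - 1) = p.1 := by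
          apply mul_right_cancel₀ hx1ne
          rw [← pow_succ, e]
          exact e2
        obtain ⟨h1, h2, h3⟩ := hPprop p hp
        rw [hd, mul_comm s, pow_mul, pow_mul, hxq1, hxq2]
        exact h3
  rw [hmain]
  have h1notin : (1 : F) ∉ P.image fun p : F × F => (p.1 + 1) / (p.1 + p.2) := by
    rw [Finset.mem_image]
    rintro ⟨p, hp, hpe⟩
    exact (hxfacts p hp).2.2.2 hpe
  have h0notin : (0 : F) ∉ insert (1 : F) (P.image fun p : F × F => (p.1 + 1) / (p.1 + p.2)) := by
    rw [Finset.mem_insert]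
    rintro (h | h)
    · exact zero_ne_one h
    · rw [Finset.mem_image] at h
      obtain ⟨p, hp, hpe⟩ := h
      exact (hxfacts p hp).2.2.1 hpe
  rw [Finset.card_insert_of_notMem h0notin, Finset.card_insert_of_notMem h1notin,
    Finset.card_image_of_injOn hinj]
  have hdisj : Disjoint (A ×ˢ B) (B ×ˢ A) := by
    rw [Finset.disjoint_left]
    rintro ⟨u, v⟩ h1 h2
    rw [Finset.mem_product] at h1 h2
    have e1 := h1.1
    have e2 := h2.1
    rw [hAdef, Finset.mem_filter] at e1
    rw [hBdef, Finset.mem_filter] at e2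
    exact hω2ne (e2.2.2.symm.trans e1.2.2)
  rw [hPdef, Finset.card_union_of_disjoint hdisj, Finset.card_product, Finset.card_product,
    hAcard, hBcard]
  ring
end

section
/- Let n = 2m, d = s(3^m − 1) with gcd(s, 3^m + 1) = t and (3^m + 1)/t > 3, over F_{3^n}. Then the number of x ∈ F_{3^n} with (x+1)^d − x^d = 0 equals t(3^m − 1) − 1. -/
open Finset

lemma cnt_pow_eq_one (K : Type) [Field K] [Fintype K] [DecidableEq K] (k : ℕ) (hk : 0 < k) :
    (Finset.univ.filter fun y : K => y ^ k = 1).card = Nat.gcd k (Fintype.card K - 1) := by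
  set q := Fintype.card K with hq
  set g := Nat.gcd k (q - 1) with hg
  have hq1 : 1 < q := Fintype.one_lt_card
  have hg0 : 0 < g := Nat.gcd_pos_of_pos_left _ hk
  have hgd : g ∣ q - 1 := Nat.gcd_dvd_right _ _
  have hgk : g ∣ k := Nat.gcd_dvd_left _ _
  -- a primitive g-th root of unity
  have hcardu : Nat.card Kˣ = q - 1 := by
    rw [Nat.card_eq_fintype_card, Fintype.card_units]
  obtain ⟨gen, hgen⟩ := IsCyclic.exists_ofOrder_eq_natCard (α := Kˣ)
  rw [hcardu] at hgen
  have hdvd : (q - 1) / g ∣ q - 1 := Nat.div_dvd_of_dvd hgd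
  have horder : orderOf (gen ^ ((q - 1) / g)) = g := by
    have hne : (q - 1) / g ≠ 0 := by
      have := Nat.div_pos (Nat.le_of_dvd (by omega) hgd) hg0
      omega
    have hdvd' : (q - 1) / g ∣ orderOf gen := by rw [hgen]; exact hdvd
    rw [orderOf_pow_of_dvd hne hdvd', hgen]
    exact Nat.div_div_self hgd (by omega)
  have hprim : IsPrimitiveRoot ((gen ^ ((q - 1) / g) : Kˣ) : K) g := by
    have h2 := IsPrimitiveRoot.orderOf (gen ^ ((q - 1) / g))
    rw [horder] at h2
    exact IsPrimitiveRoot.coe_units_iff.mpr h2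
  have hset : (Finset.univ.filter fun y : K => y ^ k = 1) = Polynomial.nthRootsFinset g (1 : K) := by
    ext y
    simp only [Finset.mem_filter, Finset.mem_univ, true_and,
      Polynomial.mem_nthRootsFinset hg0]
    constructor
    · intro hy
      have hy0 : y ≠ 0 := by
        intro h; rw [h, zero_pow hk.ne'] at hy; exact zero_ne_one hy
      exact pow_gcd_eq_one.mpr ⟨hy, FiniteField.pow_card_sub_one_eq_one y hy0⟩
    · intro hy
      obtain ⟨c, hc⟩ := hgk
      rw [hc, pow_mul, hy, one_pow]
  rw [hset, hprim.card_nthRootsFinset]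

theorem stmt_9 (m n s t d : ℕ) (hm : 0 < m) (hn : n = 2 * m) (hs : 0 < s)
    (ht : t = Nat.gcd s (3 ^ m + 1)) (hbig : (3 ^ m + 1) / t > 3)
    (hd : d = s * (3 ^ m - 1))
    (F : Type) [Field F] [Fintype F] [DecidableEq F] (hF : Fintype.card F = 3 ^ n) :
    (Finset.univ.filter fun x : F => (x + 1) ^ d - x ^ d = 0).card = t * (3 ^ m - 1) - 1 := by
  set q := 3 ^ m with hqdef
  have hq3 : 3 ≤ q := by
    calc 3 = 3 ^ 1 := (pow_one 3).symm
    _ ≤ 3 ^ m := Nat.pow_le_pow_right (by norm_num) hm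
  have hd0 : 0 < d := by
    rw [hd]; exact Nat.mul_pos hs (by omega)
  -- card F = q^2
  have hcard : Fintype.card F = q * q := by
    rw [hF, hn, two_mul, pow_add]
  have hfact : Fintype.card F - 1 = (q - 1) * (q + 1) := by
    rw [hcard]
    have key : (q - 1) * (q + 1) + 1 = q * q := by
      rcases Nat.exists_eq_add_of_le (show 1 ≤ q by omega) with ⟨r, hr⟩
      rw [hr]
      simp only [Nat.add_sub_cancel_left]
      ring
    omega
  -- gcd computation
  have hgcd : Nat.gcd d (Fintype.card F - 1) = t * (q - 1) := by
    rw [hfact, hd, mul_comm s (q - 1), Nat.gcd_mul_left, ht, mul_comm]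
  -- the bijection between solutions and nontrivial d-th roots of unity
  have hbij : (Finset.univ.filter fun x : F => (x + 1) ^ d - x ^ d = 0).card
      = ((Finset.univ.filter fun y : F => y ^ d = 1).erase 1).card := by
    apply Finset.card_bij (fun x _ => (x + 1) * x⁻¹)
    · intro x hx
      simp only [Finset.mem_filter, Finset.mem_univ, true_and, sub_eq_zero] at hx
      have hx0 : x ≠ 0 := by
        intro h
        rw [h, zero_add, one_pow, zero_pow hd0.ne'] at hx
        exact one_ne_zero hx
      have hx1 : x + 1 ≠ 0 := by
        intro h
        rw [h, zero_pow hd0.ne'] at hx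
        exact pow_ne_zero d hx0 hx.symm
      simp only [Finset.mem_erase, Finset.mem_filter, Finset.mem_univ, true_and]
      constructor
      · intro h
        field_simp at h
        exact one_ne_zero (by linear_combination h)
      · rw [mul_pow, hx, ← mul_pow, mul_inv_cancel₀ hx0, one_pow]
    · intro x hx x' hx' heq
      simp only [Finset.mem_filter, Finset.mem_univ, true_and, sub_eq_zero] at hx hx'
      have hx0 : x ≠ 0 := by
        intro h
        rw [h, zero_add, one_pow, zero_pow hd0.ne'] at hx
        exact one_ne_zero hx
      have hx'0 : x' ≠ 0 := by
        intro h
        rw [h, zero_add, one_pow, zero_pow hd0.ne'] at hx'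
        exact one_ne_zero hx'
      field_simp at heq
      linear_combination -heq
    · intro y hy
      simp only [Finset.mem_erase, Finset.mem_filter, Finset.mem_univ, true_and] at hy
      obtain ⟨hy1, hyd⟩ := hy
      have hy0 : y ≠ 0 := by
        intro h
        rw [h, zero_pow hd0.ne'] at hyd
        exact zero_ne_one hyd
      have hym : y - 1 ≠ 0 := sub_ne_zero.mpr hy1
      refine ⟨(y - 1)⁻¹, ?_, ?_⟩
      · simp only [Finset.mem_filter, Finset.mem_univ, true_and, sub_eq_zero]
        have h1 : (y - 1)⁻¹ + 1 = y * (y - 1)⁻¹ := by field_simp; ring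
        rw [h1, mul_pow, hyd, one_mul]
      · field_simp; ring
  rw [hbij, Finset.card_erase_of_mem, cnt_pow_eq_one F d hd0, hgcd]
  simp only [Finset.mem_filter, Finset.mem_univ, true_and, one_pow]
end

section
/- Let n = 2m, d = s(3^m − 1) with gcd(s, 3^m + 1) = t and (3^m + 1)/t > 3. If 2t does not divide 3^m + 1, then each of the equations (x+1)^d − x^d = 1 and (x+1)^d − x^d = 2 has exactly one solution in F_{3^n}; if 2t divides 3^m + 1, each has exactly t^2 − t + 1 solutions. -/
open Finset

set_option linter.unusedSectionVars false

section Aux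
variable {F : Type} [Field F] [Fintype F] [DecidableEq F]

lemma aux_card_pow_eq_one {a : ℕ} (ha : 0 < a) (hdvd : a ∣ Fintype.card F - 1) :
    (univ.filter fun x : F => x ^ a = 1).card = a := by
  obtain ⟨g, hg⟩ := IsCyclic.exists_generator (α := Fˣ)
  have horder : orderOf g = Fintype.card F - 1 := by
    rw [orderOf_eq_card_of_forall_mem_zpowers hg, Nat.card_eq_fintype_card, Fintype.card_units]
  have hN : orderOf g ≠ 0 := by
    rw [horder]
    have h2 : 1 < Fintype.card F := Fintype.one_lt_card
    omega
  have hdvd' : a ∣ orderOf g := by rw [horder]; exact hdvd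
  have hζ : orderOf (g ^ (orderOf g / a)) = a := orderOf_pow_orderOf_div hN hdvd'
  set ζ : F := ((g ^ (orderOf g / a) : Fˣ) : F) with hζdef
  have hζF : orderOf ζ = a := by rw [hζdef, orderOf_units, hζ]
  have hprim : IsPrimitiveRoot ζ a := hζF ▸ IsPrimitiveRoot.orderOf ζ
  have hset : (univ.filter fun x : F => x ^ a = 1) = Polynomial.nthRootsFinset a (1 : F) := by
    ext x
    simp [Polynomial.mem_nthRootsFinset ha (1 : F)]
  rw [hset, hprim.card_nthRootsFinset]


lemma aux_iff_one {s t Qp : ℕ} (ht : t = Nat.gcd s Qp) (k : F) :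
    (k ^ Qp = 1 ∧ k ^ s = 1) ↔ k ^ t = 1 := by
  constructor
  · rintro ⟨h1, h2⟩
    have hdvd : orderOf k ∣ t :=
      ht ▸ Nat.dvd_gcd (orderOf_dvd_of_pow_eq_one h2) (orderOf_dvd_of_pow_eq_one h1)
    exact orderOf_dvd_iff_pow_eq_one.mp hdvd
  · intro h
    obtain ⟨u, hu⟩ : t ∣ Qp := ht ▸ Nat.gcd_dvd_right s Qp
    obtain ⟨w, hw⟩ : t ∣ s := ht ▸ Nat.gcd_dvd_left s Qp
    exact ⟨by rw [hu, pow_mul, h, one_pow], by rw [hw, pow_mul, h, one_pow]⟩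

lemma aux_neg_core {s t Qp : ℕ} (hs : 0 < s) (ht : t = Nat.gcd s Qp)
    (hne1 : (1 : F) ≠ -1) {c : F} (h1 : c ^ Qp = 1) (h2 : c ^ s = -1) :
    c ^ t = -1 := by
  have htpos : 0 < t := ht ▸ Nat.gcd_pos_of_pos_left Qp hs
  have h2s : c ^ (2 * s) = 1 := by rw [mul_comm, pow_mul, h2, neg_one_sq]
  have hdvd1 : orderOf c ∣ Nat.gcd (2 * s) Qp :=
    Nat.dvd_gcd (orderOf_dvd_of_pow_eq_one h2s) (orderOf_dvd_of_pow_eq_one h1)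
  have hgg : Nat.gcd (2 * s) Qp ∣ 2 * t := by
    have hh : Nat.gcd (2 * s) Qp ∣ Nat.gcd (2 * s) (2 * Qp) :=
      Nat.gcd_dvd_gcd_of_dvd_right _ (dvd_mul_left Qp 2)
    rwa [Nat.gcd_mul_left, ← ht] at hh
  have h2t : c ^ (2 * t) = 1 := orderOf_dvd_iff_pow_eq_one.mp (hdvd1.trans hgg)
  have hsq : (c ^ t) * (c ^ t) = 1 := by rw [← pow_add, show t + t = 2 * t by ring]; exact h2t
  rcases mul_self_eq_one_iff.mp hsq with h | h
  · exfalso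
    obtain ⟨w, hw⟩ : t ∣ s := ht ▸ Nat.gcd_dvd_left s Qp
    rw [hw, pow_mul, h, one_pow] at h2
    exact hne1 h2
  · exact h

lemma aux_iff_neg_div {s t Qp : ℕ} (hs : 0 < s) (ht : t = Nat.gcd s Qp)
    (hne1 : (1 : F) ≠ -1) (hdiv : 2 * t ∣ Qp) (c : F) :
    (c ^ Qp = 1 ∧ c ^ s = -1) ↔ c ^ t = -1 := by
  have htpos : 0 < t := ht ▸ Nat.gcd_pos_of_pos_left Qp hs
  constructor
  · rintro ⟨h1, h2⟩; exact aux_neg_core hs ht hne1 h1 h2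
  · intro h
    obtain ⟨r, hr⟩ := hdiv
    have hQt : Qp = t * (2 * r) := by rw [hr]; ring
    have hst : t ∣ s := ht ▸ Nat.gcd_dvd_left s Qp
    obtain ⟨w, hw⟩ := hst
    have hgpos : 0 < Nat.gcd s Qp := ht ▸ htpos
    have hcop : Nat.gcd (s / t) (Qp / t) = 1 := by
      rw [ht]; exact Nat.coprime_div_gcd_div_gcd hgpos
    have hsw : s / t = w := by rw [hw]; exact Nat.mul_div_cancel_left w htpos
    have hQr : Qp / t = 2 * r := by rw [hQt]; exact Nat.mul_div_cancel_left _ htpos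
    have hwodd : ¬ 2 ∣ w := by
      intro h2w
      have : 2 ∣ Nat.gcd (s / t) (Qp / t) := Nat.dvd_gcd (hsw ▸ h2w) (hQr ▸ ⟨r, rfl⟩)
      omega
    constructor
    · rw [hQt, pow_mul, h, pow_mul, neg_one_sq, one_pow]
    · rw [hw, pow_mul, h]
      exact Odd.neg_one_pow (Nat.odd_iff.mpr (by omega))

lemma aux_iff_neg_nondiv {s t Qp : ℕ} (hs : 0 < s) (ht : t = Nat.gcd s Qp)
    (hne1 : (1 : F) ≠ -1) (hnondiv : ¬ (2 * t ∣ Qp)) (c : F) :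
    ¬ (c ^ Qp = 1 ∧ c ^ s = -1) := by
  rintro ⟨h1, h2⟩
  have htpos : 0 < t := ht ▸ Nat.gcd_pos_of_pos_left Qp hs
  have h := aux_neg_core hs ht hne1 h1 h2
  have htQ : t ∣ Qp := ht ▸ Nat.gcd_dvd_right s Qp
  obtain ⟨w, hw⟩ := htQ
  have hwodd : ¬ 2 ∣ w := fun ⟨r, hr⟩ => hnondiv ⟨r, by rw [hw, hr]; ring⟩
  rw [hw, pow_mul, h, Odd.neg_one_pow (Nat.odd_iff.mpr (by omega))] at h1
  exact hne1 h1.symm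

lemma aux_card_neg {t : ℕ} (htpos : 0 < t) (hne1 : (1 : F) ≠ -1)
    (h2tdvd : 2 * t ∣ Fintype.card F - 1) :
    (univ.filter fun c : F => c ^ t = -1).card = t := by
  have htdvd : t ∣ Fintype.card F - 1 := (dvd_mul_left t 2).trans h2tdvd
  have hu : (univ.filter fun c : F => c ^ (2 * t) = 1)
      = (univ.filter fun c : F => c ^ t = 1) ∪ (univ.filter fun c : F => c ^ t = -1) := by
    ext c
    simp only [mem_union, mem_filter, mem_univ, true_and]
    constructor
    · intro h
      have hsq : (c ^ t) * (c ^ t) = 1 := by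
        rw [← pow_add, show t + t = 2 * t by ring]; exact h
      exact mul_self_eq_one_iff.mp hsq
    · rintro (h | h) <;> rw [mul_comm, pow_mul, h] <;> simp
  have hdisj : Disjoint (univ.filter fun c : F => c ^ t = 1)
      (univ.filter fun c : F => c ^ t = -1) := by
    rw [Finset.disjoint_left]
    intro c hc1 hc2
    simp only [mem_filter, mem_univ, true_and] at hc1 hc2
    exact hne1 (hc1 ▸ hc2)
  have h1 := aux_card_pow_eq_one (F := F) (by omega) h2tdvd
  have h2 := aux_card_pow_eq_one (F := F) htpos htdvd
  rw [hu, card_union_of_disjoint hdisj, h2] at h1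
  omega

lemma aux_L0 {Q : ℕ} (hfrob : ∀ x y : F, (x + y) ^ Q = x ^ Q + y ^ Q) (h3 : (3 : F) = 0)
    (u v : F) (hu : u ^ (Q + 1) = 1) (hv : v ^ (Q + 1) = 1) (huv : u - v = 1) :
    v = 1 ∧ u = -1 := by
  have hu' : u = v + 1 := by linear_combination huv
  have h1 : (v ^ Q + 1) * (v + 1) = 1 := by
    rw [show v ^ Q + 1 = (v + 1) ^ Q by rw [hfrob, one_pow], ← pow_succ, ← hu', hu]
  have hvv : v ^ Q * v = 1 := by rw [← pow_succ]; exact hv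
  have hvQ : v ^ Q = -1 - v := by linear_combination h1 - hvv
  have hsq : (v - 1) ^ 2 = 0 := by linear_combination (-1 : F) * hvv + v * hvQ + (-v) * h3
  have hv1 : v = 1 := by
    have h0 := pow_eq_zero_iff (n := 2) (by norm_num) |>.mp hsq
    linear_combination h0
  exact ⟨hv1, by rw [hu', hv1]; linear_combination h3⟩


lemma aux_bij {Q s d : ℕ} (hQ3 : 3 ≤ Q) (hcard : Fintype.card F = Q ^ 2)
    (hfrob : ∀ x y : F, (x + y) ^ Q = x ^ Q + y ^ Q) (hQodd : Odd Q)
    (hd : d = s * (Q - 1)) (A B : F) (hAB : A ≠ B) :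
    (univ.filter fun x : F => x ≠ 0 ∧ x ≠ -1 ∧ x ^ d = A ∧ (x + 1) ^ d = B).card
      = ((univ.filter fun k : F => k ^ (Q + 1) = 1 ∧ k ^ s = A ∧ k ≠ 1) ×ˢ
         (univ.filter fun c : F => c ^ (Q + 1) = 1 ∧ c ^ s = B ∧ c ≠ 1)).card := by
  have hQ1 : 1 ≤ Q := by omega
  have hQQ : (Q - 1) * (Q + 1) = Q ^ 2 - 1 := by
    obtain ⟨q, rfl⟩ : ∃ q, Q = q + 1 := ⟨Q - 1, by omega⟩
    simp only [Nat.add_sub_cancel]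
    have h1 : (q + 1) ^ 2 = q * q + 2 * q + 1 := by ring
    have h2 : q * (q + 1 + 1) = q * q + 2 * q := by ring
    omega
  have hpow1 : ∀ x : F, x ≠ 0 → x ^ (Q ^ 2 - 1) = 1 := fun x hx => by
    rw [← hcard]; exact FiniteField.pow_card_sub_one_eq_one x hx
  have hdpow : ∀ x : F, x ^ d = (x ^ (Q - 1)) ^ s := fun x => by
    rw [hd, mul_comm, pow_mul]
  have hrel : ∀ x : F, (x + 1) ^ (Q - 1) * (x + 1) = x ^ (Q - 1) * x + 1 := fun x => by
    rw [← pow_succ, ← pow_succ, Nat.sub_add_cancel hQ1, hfrob, one_pow]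
  apply Finset.card_bij (fun x _ => (x ^ (Q - 1), (x + 1) ^ (Q - 1)))
  · intro x hx
    simp only [mem_filter, mem_univ, true_and] at hx
    obtain ⟨hx0, hxm1, hxA, hxB⟩ := hx
    have hx1 : x + 1 ≠ 0 := fun h => hxm1 (eq_neg_of_add_eq_zero_left h)
    have hknot : x ^ (Q - 1) ≠ 1 := by
      intro hk
      have hc : (x + 1) ^ (Q - 1) = 1 := by
        have h := hrel x
        rw [hk, one_mul] at h
        exact mul_right_cancel₀ hx1 (by rw [h, one_mul])
      exact hAB (by rw [← hxA, ← hxB, hdpow, hdpow, hk, hc])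
    have hcnot : (x + 1) ^ (Q - 1) ≠ 1 := by
      intro hc
      have hk : x ^ (Q - 1) = 1 := by
        have h := hrel x
        rw [hc, one_mul] at h
        have h' : x ^ (Q - 1) * x = x := by linear_combination -h
        exact mul_right_cancel₀ hx0 (by rw [h', one_mul])
      exact hAB (by rw [← hxA, ← hxB, hdpow, hdpow, hk, hc])
    simp only [Finset.mem_product, mem_filter, mem_univ, true_and]
    refine ⟨⟨?_, by rw [← hdpow, hxA], hknot⟩, ?_, by rw [← hdpow, hxB], hcnot⟩
    · rw [← pow_mul, hQQ]; exact hpow1 x hx0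
    · rw [← pow_mul, hQQ]; exact hpow1 (x + 1) hx1
  · intro x1 h1 x2 h2 heq
    simp only [mem_filter, mem_univ, true_and] at h1 h2
    obtain ⟨hx10, hx1m1, hx1A, hx1B⟩ := h1
    obtain ⟨hx20, hx2m1, hx2A, hx2B⟩ := h2
    have hk : x1 ^ (Q - 1) = x2 ^ (Q - 1) := congrArg Prod.fst heq
    have hc : (x1 + 1) ^ (Q - 1) = (x2 + 1) ^ (Q - 1) := congrArg Prod.snd heq
    have hkc : x1 ^ (Q - 1) ≠ (x1 + 1) ^ (Q - 1) := by
      intro h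
      exact hAB (by rw [← hx1A, ← hx1B, hdpow, hdpow, h])
    have hA1 := hrel x1
    have hA2 := hrel x2
    rw [← hk, ← hc] at hA2
    have h0 : ((x1 + 1) ^ (Q - 1) - x1 ^ (Q - 1)) * (x1 - x2) = 0 := by
      linear_combination hA1 - hA2
    rcases mul_eq_zero.mp h0 with h | h
    · exact absurd (sub_eq_zero.mp h).symm hkc
    · exact sub_eq_zero.mp h
  · rintro ⟨k, c⟩ hp
    simp only [Finset.mem_product, mem_filter, mem_univ, true_and] at hp
    obtain ⟨⟨hkQ, hkA, hk1⟩, hcQ, hcB, hc1⟩ := hp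
    have hk0 : k ≠ 0 := by
      intro h
      rw [h, zero_pow (by omega : Q + 1 ≠ 0)] at hkQ
      exact one_ne_zero hkQ.symm
    have hc0 : c ≠ 0 := by
      intro h
      rw [h, zero_pow (by omega : Q + 1 ≠ 0)] at hcQ
      exact one_ne_zero hcQ.symm
    have hkc : k ≠ c := fun h => hAB (by rw [← hkA, ← hcB, h])
    have hkc0 : k - c ≠ 0 := sub_ne_zero.mpr hkc
    have hc1' : c - 1 ≠ 0 := sub_ne_zero.mpr hc1
    have hk1' : k - 1 ≠ 0 := sub_ne_zero.mpr hk1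
    set x : F := (c - 1) * (k - c)⁻¹ with hxdef
    have hx0 : x ≠ 0 := mul_ne_zero hc1' (inv_ne_zero hkc0)
    have hxp1 : x + 1 = (k - 1) * (k - c)⁻¹ := by
      rw [hxdef]; field_simp; ring
    have hx1 : x + 1 ≠ 0 := by rw [hxp1]; exact mul_ne_zero hk1' (inv_ne_zero hkc0)
    have hxm1 : x ≠ -1 := fun h => hx1 (by rw [h]; ring)
    have hkQ' : k ^ Q = k⁻¹ := eq_inv_of_mul_eq_one_left (by rw [← pow_succ]; exact hkQ)
    have hcQ' : c ^ Q = c⁻¹ := eq_inv_of_mul_eq_one_left (by rw [← pow_succ]; exact hcQ)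
    have hinv0 : k⁻¹ - c⁻¹ ≠ 0 := by
      intro h
      exact hkc (inv_injective (sub_eq_zero.mp h))
    have hsub : ∀ a b : F, (a - b) ^ Q = a ^ Q - b ^ Q := fun a b => by
      rw [sub_eq_add_neg, hfrob, hQodd.neg_pow, sub_eq_add_neg]
    have e1 : x * (k - c) = c - 1 := by rw [hxdef]; field_simp
    have e2 : (x + 1) * (k - c) = k - 1 := by rw [hxp1]; field_simp
    have hxQ : x ^ Q = k * x := by
      have h1 : (x * (k - c)) ^ Q = (c - 1) ^ Q := by rw [e1]
      rw [mul_pow, hsub, hsub, hkQ', hcQ', one_pow] at h1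
      apply mul_right_cancel₀ hinv0
      rw [h1, hxdef]
      field_simp
      ring
    have hcxQ : (x + 1) ^ Q = c * (x + 1) := by
      have h1 : ((x + 1) * (k - c)) ^ Q = (k - 1) ^ Q := by rw [e2]
      rw [mul_pow, hsub, hsub, hkQ', hcQ', one_pow] at h1
      apply mul_right_cancel₀ hinv0
      rw [h1, hxp1]
      field_simp
      ring
    have hkpow : x ^ (Q - 1) = k :=
      mul_right_cancel₀ hx0 (by rw [← pow_succ, Nat.sub_add_cancel hQ1, hxQ])
    have hcpow : (x + 1) ^ (Q - 1) = c :=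
      mul_right_cancel₀ hx1 (by rw [← pow_succ, Nat.sub_add_cancel hQ1, hcxQ])
    refine ⟨x, ?_, ?_⟩
    · simp only [mem_filter, mem_univ, true_and]
      exact ⟨hx0, hxm1, by rw [hdpow, hkpow, hkA], by rw [hdpow, hcpow, hcB]⟩
    · simp only [hkpow, hcpow]

end Aux

theorem stmt_10 (m n s t d : ℕ) (hm : 0 < m) (hn : n = 2 * m) (hs : 0 < s)
    (ht : t = Nat.gcd s (3 ^ m + 1)) (hbig : (3 ^ m + 1) / t > 3)
    (hd : d = s * (3 ^ m - 1))
    (F : Type) [Field F] [Fintype F] [DecidableEq F] (hF : Fintype.card F = 3 ^ n) :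
    (¬ (2 * t ∣ 3 ^ m + 1) →
      (Finset.univ.filter fun x : F => (x + 1) ^ d - x ^ d = 1).card = 1 ∧
      (Finset.univ.filter fun x : F => (x + 1) ^ d - x ^ d = 2).card = 1) ∧
    ((2 * t ∣ 3 ^ m + 1) →
      (Finset.univ.filter fun x : F => (x + 1) ^ d - x ^ d = 1).card = t ^ 2 - t + 1 ∧
      (Finset.univ.filter fun x : F => (x + 1) ^ d - x ^ d = 2).card = t ^ 2 - t + 1) := by
  set Q := 3 ^ m with hQdef
  have hQ3 : 3 ≤ Q := by
    calc 3 = 3 ^ 1 := by norm_num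
    _ ≤ 3 ^ m := Nat.pow_le_pow_right (by norm_num) hm
  have hcard : Fintype.card F = Q ^ 2 := by
    rw [hF, hn, hQdef]
    have h2m : 2 * m = m * 2 := Nat.mul_comm 2 m
    rw [h2m, pow_mul]
  -- characteristic 3
  haveI hf3 : Fact (Nat.Prime 3) := ⟨by norm_num⟩
  have hchar : CharP F 3 := by
    obtain ⟨p, hp⟩ := CharP.exists F
    haveI hpi : CharP F p := hp
    obtain ⟨k, hpp, hk⟩ := FiniteField.card F p
    have hp3 : p = 3 := by
      have hdp : p ∣ 3 ^ n := by
        rw [← hF, hk]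
        exact dvd_pow_self p (by exact_mod_cast k.ne_zero)
      have hp3' := hpp.dvd_of_dvd_pow hdp
      rcases (Nat.prime_three).eq_one_or_self_of_dvd p hp3' with h | h
      · exact absurd h hpp.one_lt.ne'
      · exact h
    rw [hp3] at hpi; exact hpi
  haveI := hchar
  have h3 : (3 : F) = 0 := by
    have := CharP.cast_eq_zero F 3
    simpa using this
  have hne1 : (1 : F) ≠ -1 := by
    intro h
    exact one_ne_zero (α := F) (by linear_combination h3 - h)
  have hfrob : ∀ x y : F, (x + y) ^ Q = x ^ Q + y ^ Q := fun x y => by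
    rw [hQdef]
    exact add_pow_char_pow (R := F) (x := x) (y := y) (p := 3) (n := m)
  have hQodd : Odd Q := by
    rw [hQdef]; exact Odd.pow (by decide)
  have htpos : 0 < t := ht ▸ Nat.gcd_pos_of_pos_left (Q + 1) hs
  have htdvdQ : t ∣ Q + 1 := ht ▸ Nat.gcd_dvd_right s (Q + 1)
  have hdne0 : d ≠ 0 := by
    rw [hd]; exact Nat.mul_ne_zero (by omega) (by omega)
  have hdeven : Even d := by
    rw [hd]; exact Even.mul_left (Nat.Odd.sub_odd hQodd odd_one) s
  have hQQ : (Q - 1) * (Q + 1) = Q ^ 2 - 1 := by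
    obtain ⟨q, hq⟩ : ∃ q, Q = q + 1 := ⟨Q - 1, by omega⟩
    rw [hq]
    simp only [Nat.add_sub_cancel]
    have h1 : (q + 1) ^ 2 = q * q + 2 * q + 1 := by ring
    have h2 : q * (q + 1 + 1) = q * q + 2 * q := by ring
    omega
  have hdvdcard : ∀ a : ℕ, a ∣ Q + 1 → a ∣ Fintype.card F - 1 := fun a ha => by
    rw [hcard, ← hQQ]
    exact ha.trans (dvd_mul_left (Q + 1) (Q - 1))
  have hpow1 : ∀ x : F, x ≠ 0 → x ^ (Q ^ 2 - 1) = 1 := fun x hx => by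
    rw [← hcard]; exact FiniteField.pow_card_sub_one_eq_one x hx
  have hdQp : ∀ x : F, x ≠ 0 → (x ^ d) ^ (Q + 1) = 1 := fun x hx => by
    rw [← pow_mul, hd]
    have harith : s * (Q - 1) * (Q + 1) = (Q ^ 2 - 1) * s := by
      rw [mul_assoc, hQQ, mul_comm]
    rw [harith, pow_mul, hpow1 x hx, one_pow]
  -- decompositions
  have hdec1 : (univ.filter fun x : F => (x + 1) ^ d - x ^ d = 1)
      = insert (0 : F) (univ.filter fun x : F =>
          x ≠ 0 ∧ x ≠ -1 ∧ x ^ d = 1 ∧ (x + 1) ^ d = -1) := by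
    ext x
    simp only [mem_insert, mem_filter, mem_univ, true_and]
    constructor
    · intro hx
      by_cases h0 : x = 0
      · exact Or.inl h0
      · right
        by_cases hm1 : x = -1
        · exfalso
          rw [hm1, show (-1 + 1 : F) = 0 by ring, zero_pow hdne0,
            Even.neg_one_pow hdeven] at hx
          exact hne1 (by linear_combination -hx)
        · have hx1 : x + 1 ≠ 0 := fun h => hm1 (eq_neg_of_add_eq_zero_left h)
          obtain ⟨hv, hu⟩ := aux_L0 hfrob h3 ((x + 1) ^ d) (x ^ d)
            (hdQp (x + 1) hx1) (hdQp x h0) hx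
          exact ⟨h0, hm1, hv, hu⟩
    · rintro (rfl | ⟨h0, h1m, hA, hB⟩)
      · rw [zero_pow hdne0, zero_add, one_pow]; ring
      · rw [hA, hB]; linear_combination -h3
  have hdec2 : (univ.filter fun x : F => (x + 1) ^ d - x ^ d = 2)
      = insert (-1 : F) (univ.filter fun x : F =>
          x ≠ 0 ∧ x ≠ -1 ∧ x ^ d = -1 ∧ (x + 1) ^ d = 1) := by
    ext x
    simp only [mem_insert, mem_filter, mem_univ, true_and]
    constructor
    · intro hx
      by_cases hm1 : x = -1
      · exact Or.inl hm1
      · right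
        by_cases h0 : x = 0
        · exfalso
          rw [h0, zero_add, one_pow, zero_pow hdne0] at hx
          exact hne1 (by linear_combination hx + h3)
        · have hx1 : x + 1 ≠ 0 := fun h => hm1 (eq_neg_of_add_eq_zero_left h)
          have hvu : x ^ d - (x + 1) ^ d = 1 := by linear_combination -hx - h3
          obtain ⟨hv, hu⟩ := aux_L0 hfrob h3 (x ^ d) ((x + 1) ^ d)
            (hdQp x h0) (hdQp (x + 1) hx1) hvu
          exact ⟨h0, hm1, hu, hv⟩
    · rintro (rfl | ⟨h0, h1m, hA, hB⟩)
      · rw [show (-1 + 1 : F) = 0 by ring, zero_pow hdne0, Even.neg_one_pow hdeven]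
        linear_combination -h3
      · rw [hA, hB]; norm_num
  -- card of the k-filter with value 1
  have hK1 : (univ.filter fun k : F => k ^ (Q + 1) = 1 ∧ k ^ s = 1 ∧ k ≠ 1).card = t - 1 := by
    have he : (univ.filter fun k : F => k ^ (Q + 1) = 1 ∧ k ^ s = 1 ∧ k ≠ 1)
        = (univ.filter fun k : F => k ^ t = 1).erase 1 := by
      ext k
      simp only [mem_erase, mem_filter, mem_univ, true_and]
      constructor
      · rintro ⟨ha, hb, hc⟩; exact ⟨hc, (aux_iff_one ht k).mp ⟨ha, hb⟩⟩
      · rintro ⟨hc, hh⟩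
        obtain ⟨ha, hb⟩ := (aux_iff_one ht k).mpr hh
        exact ⟨ha, hb, hc⟩
    rw [he, card_erase_of_mem (by simp), aux_card_pow_eq_one htpos (hdvdcard t htdvdQ)]
  refine ⟨fun hnon => ?_, fun hdiv => ?_⟩
  · -- non-dividing case
    have hCneg : (univ.filter fun c : F => c ^ (Q + 1) = 1 ∧ c ^ s = -1 ∧ c ≠ 1).card = 0 := by
      rw [Finset.card_eq_zero, Finset.eq_empty_iff_forall_notMem]
      intro c hc
      simp only [mem_filter, mem_univ, true_and] at hc
      exact aux_iff_neg_nondiv hs ht hne1 hnon c ⟨hc.1, hc.2.1⟩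
    constructor
    · rw [hdec1, card_insert_of_notMem (by simp),
        aux_bij hQ3 hcard hfrob hQodd hd 1 (-1) hne1, Finset.card_product, hCneg]
      simp
    · rw [hdec2, card_insert_of_notMem (by simp),
        aux_bij hQ3 hcard hfrob hQodd hd (-1) 1 hne1.symm, Finset.card_product, hCneg]
      simp
  · -- dividing case
    have hCneg : (univ.filter fun c : F => c ^ (Q + 1) = 1 ∧ c ^ s = -1 ∧ c ≠ 1).card = t := by
      have he : (univ.filter fun c : F => c ^ (Q + 1) = 1 ∧ c ^ s = -1 ∧ c ≠ 1)
          = (univ.filter fun c : F => c ^ t = -1) := by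
        ext c
        simp only [mem_filter, mem_univ, true_and]
        constructor
        · rintro ⟨ha, hb, _⟩; exact (aux_iff_neg_div hs ht hne1 hdiv c).mp ⟨ha, hb⟩
        · intro hh
          obtain ⟨ha, hb⟩ := (aux_iff_neg_div hs ht hne1 hdiv c).mpr hh
          refine ⟨ha, hb, fun h1 => ?_⟩
          rw [h1, one_pow] at hh
          exact hne1 hh
      rw [he]
      exact aux_card_neg htpos hne1 (hdvdcard (2 * t) hdiv)
    have harith : (t - 1) * t + 1 = t ^ 2 - t + 1 := by
      obtain ⟨t', rfl⟩ : ∃ t', t = t' + 1 := ⟨t - 1, by omega⟩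
      simp only [Nat.add_sub_cancel]
      have e1 : (t' + 1) ^ 2 = t' * t' + 2 * t' + 1 := by ring
      have e2 : t' * (t' + 1) = t' * t' + t' := by ring
      omega
    constructor
    · rw [hdec1, card_insert_of_notMem (by simp),
        aux_bij hQ3 hcard hfrob hQodd hd 1 (-1) hne1, Finset.card_product, hCneg, hK1]
      exact harith
    · rw [hdec2, card_insert_of_notMem (by simp),
        aux_bij hQ3 hcard hfrob hQodd hd (-1) 1 hne1.symm, Finset.card_product, hCneg, hK1]
      rw [mul_comm] at harith
      exact harith
end

section
/- Let p > 3 be prime, n = 2m, d = s(p^m − 1) with gcd(s, p^m + 1) = t and (p^m + 1)/t > 3. If 2t does not divide p^m + 1, then the equations (x+1)^d − x^d = 2 and (x+1)^d − x^d = −2 have no solutions in F_{p^n}; if 2t divides p^m + 1, each has exactly t^2 − t solutions. -/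
open Finset

lemma card_pow_eq_one_of_dvd (F : Type) [Field F] [Fintype F] [DecidableEq F]
    {k : ℕ} (hk : 0 < k) (hdvd : k ∣ Fintype.card F - 1) :
    (Finset.univ.filter fun x : F => x ^ k = 1).card = k := by
  obtain ⟨g, hg⟩ := IsCyclic.exists_ofOrder_eq_natCard (α := Fˣ)
  have hN : Nat.card Fˣ = Fintype.card F - 1 := by
    rw [Nat.card_eq_fintype_card, Fintype.card_units]
  rw [hN] at hg
  have hNpos : 0 < Fintype.card F - 1 := by
    have := Fintype.one_lt_card (α := F)
    omega
  set N := Fintype.card F - 1 with hNdef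
  have hord : orderOf (g ^ (N / k)) = k := by
    have h2 := orderOf_pow_orderOf_div (x := g) (n := k) (by omega) (by rw [hg]; exact hdvd)
    rwa [hg] at h2
  have hordF : orderOf ((g : F) ^ (N / k)) = k := by
    rw [← Units.val_pow_eq_pow_val, orderOf_units]; exact hord
  have hprim : IsPrimitiveRoot ((g : F) ^ (N / k)) k := by
    have := IsPrimitiveRoot.orderOf ((g : F) ^ (N / k))
    rwa [hordF] at this
  have hcard := hprim.card_nthRootsFinset
  have hset : (Finset.univ.filter fun x : F => x ^ k = 1) = Polynomial.nthRootsFinset k (1 : F) := by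
    ext x
    simp [Polynomial.mem_nthRootsFinset hk]
  rw [hset, hcard]

lemma charP_of_card (F : Type) [Field F] [Fintype F] (p n : ℕ) (hp : p.Prime) (hn : 0 < n)
    (hF : Fintype.card F = p ^ n) : CharP F p := by
  have h2 : (ringChar F).Prime := CharP.char_is_prime F (ringChar F)
  obtain ⟨k, -, hcard⟩ := FiniteField.card F (ringChar F)
  have hdvd : ringChar F ∣ p ^ n := by
    rw [← hF, hcard]
    exact dvd_pow_self _ (by exact_mod_cast k.pos.ne')
  have h3 : ringChar F = p :=
    (Nat.prime_dvd_prime_iff_eq h2 hp).mp (h2.dvd_of_dvd_pow hdvd)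
  have h1 : CharP F (ringChar F) := ringChar.charP F
  rwa [h3] at h1

lemma count_two (p m s t d : ℕ) (hp : p.Prime) (hp3 : p > 3) (hm : 0 < m) (hs : 0 < s)
    (ht : t = Nat.gcd s (p ^ m + 1)) (hd : d = s * (p ^ m - 1))
    (F : Type) [Field F] [Fintype F] [DecidableEq F] (hF : Fintype.card F = (p ^ m) ^ 2) :
    (Finset.univ.filter fun x : F => (x + 1) ^ d - x ^ d = 2).card =
      (Finset.univ.filter fun a : F => a ^ (p ^ m + 1) = 1 ∧ a ^ s = -1).card * (t - 1) := by
  set q := p ^ m with hq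
  have hq5 : 5 ≤ q := by
    have h1 : p ≤ p ^ m := Nat.le_self_pow hm.ne' p
    have h2 : 5 ≤ p := by
      by_contra h
      push_neg at h
      interval_cases p <;> norm_num at hp
    omega
  have hqodd : Odd q := (hp.odd_of_ne_two (by omega)).pow
  have hdeven : Even d := by
    rw [hd]
    exact (Nat.Odd.sub_odd hqodd odd_one).mul_left s
  have hd0 : d ≠ 0 := by
    rw [hd]
    have : 0 < q - 1 := by omega
    positivity
  haveI hchar : CharP F p := charP_of_card F p (m * 2) hp (by omega) (by rw [hF, pow_mul])
  haveI hfact : Fact p.Prime := ⟨hp⟩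
  have htwoF : (2 : F) ≠ 0 := by
    intro h
    have := (CharP.cast_eq_zero_iff F p 2).mp (by exact_mod_cast h)
    have := Nat.le_of_dvd (by norm_num) this
    omega
  have h3F : (3 : F) ≠ 0 := by
    intro h
    have := (CharP.cast_eq_zero_iff F p 3).mp (by exact_mod_cast h)
    rcases (Nat.prime_dvd_prime_iff_eq hp (by norm_num)).mp this with rfl
    omega
  have hneg1 : (-1 : F) ≠ 1 := by
    intro h
    apply htwoF
    linear_combination -h
  have hgen : ∀ Q : ℕ, 1 ≤ Q → (Q - 1) * (Q + 1) + 1 = Q ^ 2 := by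
    intro Q hQ
    obtain ⟨r, rfl⟩ := Nat.exists_eq_add_of_le hQ
    simp only [Nat.add_sub_cancel_left]
    ring
  have hcard1 : Fintype.card F - 1 = (q - 1) * (q + 1) := by
    have h := hgen q (by omega)
    rw [hF]
    omega
  have hpow1 : ∀ y : F, y ≠ 0 → y ^ ((q - 1) * (q + 1)) = 1 := by
    intro y hy
    rw [← hcard1]
    exact FiniteField.pow_card_sub_one_eq_one y hy
  have two_pow : (2 : F) ^ q = 2 := by
    have h := add_pow_char_pow (1 : F) 1 p m
    norm_num at h
    exact h
  have hds : ∀ y : F, y ^ d = (y ^ (q - 1)) ^ s := by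
    intro y
    rw [hd, mul_comm s (q - 1), pow_mul]
  have hxq : ∀ y : F, y ^ q = y ^ (q - 1) * y := by
    intro y
    rw [← pow_succ]
    congr 1
    omega
  have haddq : ∀ y : F, (y + 1) ^ q = y ^ q + 1 := by
    intro y
    have h := add_pow_char_pow y (1 : F) p m
    rwa [one_pow] at h
  have hsubq : ∀ y z : F, (y - z) ^ q = y ^ q - z ^ q := by
    intro y z
    exact sub_pow_char_pow y z (p := p) (n := m)
  -- characterization
  have hchar2 : ∀ x : F, ((x + 1) ^ d - x ^ d = 2) ↔ (x ^ d = -1 ∧ (x + 1) ^ d = 1) := by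
    intro x
    constructor
    · intro hx
      have hx0 : x ≠ 0 := by
        rintro rfl
        rw [zero_pow hd0, zero_add, one_pow, sub_zero] at hx
        exact one_ne_zero (α := F) (by linear_combination -hx)
      have hx1' : x + 1 ≠ 0 := by
        intro h
        rw [h, zero_pow hd0, zero_sub] at hx
        have hxd : x = -1 := by linear_combination h
        rw [hxd, hdeven.neg_one_pow] at hx
        exact h3F (by linear_combination -hx)
      have hu1 : ((x + 1) ^ d) ^ (q + 1) = 1 := by
        rw [← pow_mul, show d * (q + 1) = ((q - 1) * (q + 1)) * s by rw [hd]; ring,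
          pow_mul, hpow1 _ hx1', one_pow]
      have hv1 : (x ^ d) ^ (q + 1) = 1 := by
        rw [← pow_mul, show d * (q + 1) = ((q - 1) * (q + 1)) * s by rw [hd]; ring,
          pow_mul, hpow1 _ hx0, one_pow]
      set u := (x + 1) ^ d with hu
      set v := x ^ d with hv
      have hu0 : u ≠ 0 := by
        intro h
        rw [h, zero_pow (by omega)] at hu1
        exact zero_ne_one hu1
      have hv0 : v ≠ 0 := by
        intro h
        rw [h, zero_pow (by omega)] at hv1
        exact zero_ne_one hv1
      have hqu : u ^ q = u⁻¹ := by
        refine eq_inv_of_mul_eq_one_left ?_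
        rw [← pow_succ]
        exact hu1
      have hqv : v ^ q = v⁻¹ := by
        refine eq_inv_of_mul_eq_one_left ?_
        rw [← pow_succ]
        exact hv1
      have hfr : u⁻¹ - v⁻¹ = 2 := by
        have h1 : (u - v) ^ q = u ^ q - v ^ q := hsubq u v
        rw [hx, two_pow, hqu, hqv] at h1
        exact h1.symm
      have huv : u * v = -1 := by
        have h3 : v - u = 2 * (u * v) := by
          field_simp at hfr
          linear_combination hfr
        have h6 : (2 : F) * (u * v) = 2 * (-1) := by linear_combination -h3 - hx
        exact mul_left_cancel₀ htwoF h6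
      have hveq : v = -1 := by
        have h4 : (v + 1) ^ 2 = 0 := by linear_combination huv - v * hx
        have h5 : v + 1 = 0 := by
          exact pow_eq_zero_iff (n := 2) (by norm_num) |>.mp h4
        linear_combination h5
      exact ⟨hveq, by linear_combination hx + hveq⟩
    · rintro ⟨h1, h2⟩
      rw [h1, h2]
      ring
  have hSeq : (Finset.univ.filter fun x : F => (x + 1) ^ d - x ^ d = 2) =
      Finset.univ.filter fun x : F => x ^ d = -1 ∧ (x + 1) ^ d = 1 := by
    ext x
    simp only [mem_filter, mem_univ, true_and]
    exact hchar2 x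
  rw [hSeq]
  -- the pair set
  set A : Finset F := Finset.univ.filter fun a : F => a ^ (q + 1) = 1 ∧ a ^ s = -1 with hA
  set B : Finset F := Finset.univ.filter fun b : F => b ^ (q + 1) = 1 ∧ b ^ s = 1 ∧ b ≠ 1 with hB
  have hroot : ∀ y : F, y ≠ 0 → (y ^ (q - 1)) ^ (q + 1) = 1 := by
    intro y hy
    rw [← pow_mul]
    exact hpow1 y hy
  have hbij : (Finset.univ.filter fun x : F => x ^ d = -1 ∧ (x + 1) ^ d = 1).card =
      (A ×ˢ B).card := by
    apply Finset.card_bij (fun x _ => (x ^ (q - 1), (x + 1) ^ (q - 1)))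
    · intro x hx
      simp only [mem_filter, mem_univ, true_and] at hx
      obtain ⟨hxd, hxd1⟩ := hx
      have hx0 : x ≠ 0 := by
        rintro rfl
        rw [zero_pow hd0] at hxd
        exact one_ne_zero (α := F) (by linear_combination hxd)
      have hx1' : x + 1 ≠ 0 := by
        intro h
        rw [h, zero_pow hd0] at hxd1
        exact zero_ne_one hxd1
      have ha : (x ^ (q - 1)) ^ s = -1 := by rw [← hds]; exact hxd
      have hb : ((x + 1) ^ (q - 1)) ^ s = 1 := by rw [← hds]; exact hxd1
      have hbne : (x + 1) ^ (q - 1) ≠ 1 := by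
        intro h
        have h1 : (x + 1) ^ q = x + 1 := by rw [hxq, h, one_mul]
        have h2 : x ^ q = x := by
          have := haddq x
          rw [h1] at this
          linear_combination -this
        have h3 : x ^ (q - 1) = 1 := by
          have h4 : x ^ (q - 1) * x = 1 * x := by rw [← hxq, h2, one_mul]
          exact mul_right_cancel₀ hx0 h4
        rw [h3, one_pow] at ha
        exact hneg1 ha.symm
      simp only [Finset.mem_product, hA, hB, mem_filter, mem_univ, true_and]
      exact ⟨⟨hroot x hx0, ha⟩, hroot _ hx1', hb, hbne⟩
    · intro x hx y hy hxy
      simp only [mem_filter, mem_univ, true_and] at hx hy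
      simp only [Prod.mk.injEq] at hxy
      obtain ⟨hab1, hab2⟩ := hxy
      have hx0 : x ≠ 0 := by
        rintro rfl
        rw [zero_pow hd0] at hx
        exact one_ne_zero (α := F) (by linear_combination hx.1)
      have hy0 : y ≠ 0 := by
        rintro rfl
        rw [zero_pow hd0] at hy
        exact one_ne_zero (α := F) (by linear_combination hy.1)
      have hasne : (x ^ (q - 1)) ≠ (x + 1) ^ (q - 1) := by
        intro h
        have h1 : (x ^ (q - 1)) ^ s = ((x + 1) ^ (q - 1)) ^ s := by rw [h]
        rw [← hds, ← hds, hx.1, hx.2] at h1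
        exact hneg1 h1
      have e1 : x ^ (q - 1) * x + 1 = (x + 1) ^ (q - 1) * (x + 1) := by
        rw [← hxq, ← hxq, ← haddq]
      have e2 : y ^ (q - 1) * y + 1 = (y + 1) ^ (q - 1) * (y + 1) := by
        rw [← hxq, ← hxq, ← haddq]
      rw [← hab1, ← hab2] at e2
      have e3 : (x ^ (q - 1) - (x + 1) ^ (q - 1)) * (x - y) = 0 := by
        linear_combination e1 - e2
      rcases mul_eq_zero.mp e3 with h | h
      · exact absurd (by linear_combination h) hasne
      · linear_combination h
    · rintro ⟨a, b⟩ hab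
      simp only [Finset.mem_product, hA, hB, mem_filter, mem_univ, true_and] at hab
      obtain ⟨⟨ha1, ha2⟩, hb1, hb2, hbne⟩ := hab
      have ha0 : a ≠ 0 := by
        intro h
        rw [h, zero_pow (by omega)] at ha1
        exact zero_ne_one ha1
      have hb0 : b ≠ 0 := by
        intro h
        rw [h, zero_pow (by omega)] at hb1
        exact zero_ne_one hb1
      have habne : a ≠ b := by
        intro h
        rw [h, hb2] at ha2
        exact hneg1 ha2.symm
      have hane1 : a ≠ 1 := by
        intro h
        rw [h, one_pow] at ha2
        exact hneg1 ha2.symm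
      have hains : a - b ≠ 0 := sub_ne_zero.mpr habne
      have haq : a ^ q = a⁻¹ := by
        refine eq_inv_of_mul_eq_one_left ?_
        rw [← pow_succ]
        exact ha1
      have hbq : b ^ q = b⁻¹ := by
        refine eq_inv_of_mul_eq_one_left ?_
        rw [← pow_succ]
        exact hb1
      set x : F := (b - 1) / (a - b) with hxdef
      have hx0 : x ≠ 0 := div_ne_zero (sub_ne_zero.mpr hbne) hains
      have hx1eq : x + 1 = (a - 1) / (a - b) := by
        rw [hxdef]
        field_simp
        ring
      have hx1' : x + 1 ≠ 0 := by
        rw [hx1eq]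
        exact div_ne_zero (sub_ne_zero.mpr hane1) hains
      have hinvne : a⁻¹ - b⁻¹ ≠ 0 := by
        intro h
        have h2 : a⁻¹ = b⁻¹ := by linear_combination h
        exact habne (by rw [← inv_inv a, h2, inv_inv])
      have hxqa : x ^ q = a * x := by
        rw [hxdef, div_pow, hsubq, hsubq, one_pow, haq, hbq]
        rw [div_eq_iff hinvne]
        field_simp
        ring
      have hxq1 : x ^ (q - 1) = a := by
        have h4 : x ^ (q - 1) * x = a * x := by rw [← hxq]; exact hxqa
        exact mul_right_cancel₀ hx0 h4
      have hx1qb : (x + 1) ^ q = b * (x + 1) := by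
        rw [haddq, hxqa, hx1eq, hxdef]
        field_simp
        ring
      have hx1q1 : (x + 1) ^ (q - 1) = b := by
        have h4 : (x + 1) ^ (q - 1) * (x + 1) = b * (x + 1) := by rw [← hxq]; exact hx1qb
        exact mul_right_cancel₀ hx1' h4
      refine ⟨x, ?_, ?_⟩
      · simp only [mem_filter, mem_univ, true_and]
        constructor
        · rw [hds, hxq1]; exact ha2
        · rw [hds, hx1q1]; exact hb2
      · show (x ^ (q - 1), (x + 1) ^ (q - 1)) = (a, b)
        rw [hxq1, hx1q1]
  rw [hbij, Finset.card_product]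
  congr 1
  -- card B = t - 1
  have hts : t ∣ s := ht ▸ Nat.gcd_dvd_left _ _
  have htq : t ∣ q + 1 := ht ▸ Nat.gcd_dvd_right _ _
  have htpos : 0 < t := ht ▸ Nat.gcd_pos_of_pos_left _ hs
  have hBeq : B = (Finset.univ.filter fun b : F => b ^ t = 1).erase 1 := by
    ext b
    simp only [hB, mem_filter, mem_univ, true_and, mem_erase]
    constructor
    · rintro ⟨h1, h2, h3⟩
      refine ⟨h3, ?_⟩
      have o1 : orderOf b ∣ q + 1 := orderOf_dvd_of_pow_eq_one h1
      have o2 : orderOf b ∣ s := orderOf_dvd_of_pow_eq_one h2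
      exact orderOf_dvd_iff_pow_eq_one.mp (ht ▸ Nat.dvd_gcd o2 o1)
    · rintro ⟨h3, h1⟩
      obtain ⟨c, hc⟩ := htq
      obtain ⟨e, he⟩ := hts
      exact ⟨by rw [hc, pow_mul, h1, one_pow], by rw [he, pow_mul, h1, one_pow], h3⟩
  rw [hBeq, Finset.card_erase_of_mem (by simp), card_pow_eq_one_of_dvd F htpos]
  rw [hcard1]
  exact htq.mul_left _

lemma count_A_nondvd (p m s t : ℕ) (hp : p.Prime) (hp3 : p > 3) (hm : 0 < m) (hs : 0 < s)
    (ht : t = Nat.gcd s (p ^ m + 1))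
    (F : Type) [Field F] [Fintype F] [DecidableEq F] (hF : Fintype.card F = (p ^ m) ^ 2)
    (hndvd : ¬ (2 * t ∣ p ^ m + 1)) :
    (Finset.univ.filter fun a : F => a ^ (p ^ m + 1) = 1 ∧ a ^ s = -1).card = 0 := by
  haveI hchar : CharP F p := charP_of_card F p (m * 2) hp (by omega) (by rw [hF, pow_mul])
  have htwoF : (2 : F) ≠ 0 := by
    intro h
    have := (CharP.cast_eq_zero_iff F p 2).mp (by exact_mod_cast h)
    have := Nat.le_of_dvd (by norm_num) this
    omega
  have hneg1 : (-1 : F) ≠ 1 := by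
    intro h
    apply htwoF
    linear_combination -h
  rw [Finset.card_eq_zero, Finset.filter_eq_empty_iff]
  intro a _
  rintro ⟨h1, h2⟩
  have hts : t ∣ s := ht ▸ Nat.gcd_dvd_left _ _
  have htq : t ∣ p ^ m + 1 := ht ▸ Nat.gcd_dvd_right _ _
  obtain ⟨c, hc⟩ := htq
  obtain ⟨e, he⟩ := hts
  have hcodd : ¬ 2 ∣ c := by
    rintro ⟨c2, hc2⟩
    exact hndvd ⟨c2, by rw [hc, hc2]; ring⟩
  have hpow : a ^ (s * c) = 1 := by
    rw [show s * c = (p ^ m + 1) * e by rw [he, hc]; ring, pow_mul, h1, one_pow]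
  have hm1 : (-1 : F) ^ c = 1 := by
    rw [← h2, ← pow_mul]; exact hpow
  rw [Odd.neg_one_pow (Nat.odd_iff.mpr (by omega))] at hm1
  exact hneg1 hm1

lemma count_A_dvd (p m s t : ℕ) (hp : p.Prime) (hp3 : p > 3) (hm : 0 < m) (hs : 0 < s)
    (ht : t = Nat.gcd s (p ^ m + 1))
    (F : Type) [Field F] [Fintype F] [DecidableEq F] (hF : Fintype.card F = (p ^ m) ^ 2)
    (hdvd : 2 * t ∣ p ^ m + 1) :
    (Finset.univ.filter fun a : F => a ^ (p ^ m + 1) = 1 ∧ a ^ s = -1).card = t := by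
  set q := p ^ m with hq
  haveI hchar : CharP F p := charP_of_card F p (m * 2) hp (by omega) (by rw [hF, pow_mul])
  have htwoF : (2 : F) ≠ 0 := by
    intro h
    have := (CharP.cast_eq_zero_iff F p 2).mp (by exact_mod_cast h)
    have := Nat.le_of_dvd (by norm_num) this
    omega
  have hneg1 : (-1 : F) ≠ 1 := by
    intro h
    apply htwoF
    linear_combination -h
  have hq1 : 1 ≤ q := Nat.one_le_pow _ _ hp.pos
  have hgen : ∀ Q : ℕ, 1 ≤ Q → (Q - 1) * (Q + 1) + 1 = Q ^ 2 := by
    intro Q hQ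
    obtain ⟨r, rfl⟩ := Nat.exists_eq_add_of_le hQ
    simp only [Nat.add_sub_cancel_left]
    ring
  have hcard1 : Fintype.card F - 1 = (q - 1) * (q + 1) := by
    have h := hgen q hq1
    rw [hF]
    omega
  have hts : t ∣ s := ht ▸ Nat.gcd_dvd_left _ _
  have htq : t ∣ q + 1 := ht ▸ Nat.gcd_dvd_right _ _
  have htpos : 0 < t := ht ▸ Nat.gcd_pos_of_pos_left _ hs
  obtain ⟨w, hw⟩ := hdvd
  have hgcd2 : Nat.gcd (2 * s) (q + 1) = 2 * t := by
    have h1 : Nat.gcd (2 * s) (2 * (t * w)) = 2 * Nat.gcd s (t * w) :=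
      Nat.gcd_mul_left 2 s (t * w)
    have h2 : Nat.gcd s (t * w) = t := by
      apply Nat.dvd_antisymm
      · have h3 : Nat.gcd s (t * w) ∣ Nat.gcd s (q + 1) :=
          Nat.dvd_gcd (Nat.gcd_dvd_left _ _)
            ((Nat.gcd_dvd_right _ _).trans ⟨2, by rw [hw]; ring⟩)
        rwa [← ht] at h3
      · exact Nat.dvd_gcd hts (Dvd.intro w rfl)
    rw [show q + 1 = 2 * (t * w) by rw [hw]; ring, h1, h2]
  have hgcdst : Nat.gcd s (2 * t) = t := by
    apply Nat.dvd_antisymm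
    · have h3 : Nat.gcd s (2 * t) ∣ Nat.gcd s (q + 1) :=
        Nat.dvd_gcd (Nat.gcd_dvd_left _ _)
          ((Nat.gcd_dvd_right _ _).trans ⟨w, hw⟩)
      rwa [← ht] at h3
    · exact Nat.dvd_gcd hts (dvd_mul_left t 2)
  obtain ⟨e, he⟩ := hts
  have hset2 : (Finset.univ.filter fun a : F => a ^ (q + 1) = 1 ∧ a ^ s = -1) =
      (Finset.univ.filter fun a : F => a ^ (2 * t) = 1) \
        (Finset.univ.filter fun a : F => a ^ t = 1) := by
    ext a
    simp only [mem_filter, mem_univ, true_and, mem_sdiff]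
    constructor
    · rintro ⟨h1, h2⟩
      constructor
      · have h2s : a ^ (2 * s) = 1 := by
          rw [show 2 * s = s * 2 by ring, pow_mul, h2]
          norm_num
        exact orderOf_dvd_iff_pow_eq_one.mp
          (hgcd2 ▸ Nat.dvd_gcd (orderOf_dvd_of_pow_eq_one h2s) (orderOf_dvd_of_pow_eq_one h1))
      · intro h3
        rw [he, pow_mul, h3, one_pow] at h2
        exact hneg1 h2.symm
    · rintro ⟨h1, h2⟩
      have hs1 : a ^ (q + 1) = 1 := by
        rw [hw, pow_mul, h1, one_pow]
      refine ⟨hs1, ?_⟩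
      have hsq : a ^ s * a ^ s = 1 := by
        rw [← pow_add, show s + s = (2 * t) * e by rw [he]; ring, pow_mul, h1, one_pow]
      rcases mul_self_eq_one_iff.mp hsq with h | h
      · exfalso
        apply h2
        exact orderOf_dvd_iff_pow_eq_one.mp
          (hgcdst ▸ Nat.dvd_gcd (orderOf_dvd_of_pow_eq_one h) (orderOf_dvd_of_pow_eq_one h1))
      · exact h
  have hsub : (Finset.univ.filter fun a : F => a ^ t = 1) ⊆
      (Finset.univ.filter fun a : F => a ^ (2 * t) = 1) := by
    intro a ha
    simp only [mem_filter, mem_univ, true_and] at ha ⊢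
    rw [show 2 * t = t * 2 by ring, pow_mul, ha, one_pow]
  have hd2 : 2 * t ∣ Fintype.card F - 1 := by
    rw [hcard1]
    exact Dvd.dvd.mul_left ⟨w, hw⟩ (q - 1)
  have hd1 : t ∣ Fintype.card F - 1 := by
    rw [hcard1]
    exact Dvd.dvd.mul_left htq (q - 1)
  rw [hset2, Finset.card_sdiff_of_subset hsub, card_pow_eq_one_of_dvd F (by omega) hd2,
    card_pow_eq_one_of_dvd F htpos hd1]
  omega

lemma count_neg (d : ℕ) (hdeven : Even d) (F : Type) [Field F] [Fintype F] [DecidableEq F] :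
    (Finset.univ.filter fun x : F => (x + 1) ^ d - x ^ d = -2).card =
      (Finset.univ.filter fun x : F => (x + 1) ^ d - x ^ d = 2).card := by
  apply Finset.card_bij (fun x _ => -1 - x)
  · intro x hx
    simp only [mem_filter, mem_univ, true_and] at hx ⊢
    have h1 : (-1 - x : F) + 1 = -x := by ring
    have h2 : (-1 - x : F) = -(x + 1) := by ring
    rw [h1, h2, hdeven.neg_pow, hdeven.neg_pow]
    linear_combination -hx
  · intro a _ b _ h
    linear_combination -h
  · intro y hy
    simp only [mem_filter, mem_univ, true_and] at hy ⊢
    refine ⟨-1 - y, ?_, by ring⟩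
    have h1 : (-1 - y : F) + 1 = -y := by ring
    have h2 : (-1 - y : F) = -(y + 1) := by ring
    rw [h1, h2, hdeven.neg_pow, hdeven.neg_pow]
    linear_combination -hy

theorem stmt_11 (p m n s t d : ℕ) (hp : p.Prime) (hp3 : p > 3)
    (hm : 0 < m) (hn : n = 2 * m) (hs : 0 < s)
    (ht : t = Nat.gcd s (p ^ m + 1)) (hbig : (p ^ m + 1) / t > 3)
    (hd : d = s * (p ^ m - 1))
    (F : Type) [Field F] [Fintype F] [DecidableEq F] (hF : Fintype.card F = p ^ n) :
    (¬ (2 * t ∣ p ^ m + 1) →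
      (Finset.univ.filter fun x : F => (x + 1) ^ d - x ^ d = 2).card = 0 ∧
      (Finset.univ.filter fun x : F => (x + 1) ^ d - x ^ d = -2).card = 0) ∧
    ((2 * t ∣ p ^ m + 1) →
      (Finset.univ.filter fun x : F => (x + 1) ^ d - x ^ d = 2).card = t ^ 2 - t ∧
      (Finset.univ.filter fun x : F => (x + 1) ^ d - x ^ d = -2).card = t ^ 2 - t) := by
  have hF2 : Fintype.card F = (p ^ m) ^ 2 := by rw [hF, hn, mul_comm 2 m, pow_mul]
  have hqodd : Odd (p ^ m) := (hp.odd_of_ne_two (by omega)).pow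
  have hdeven : Even d := by
    rw [hd]
    exact (Nat.Odd.sub_odd hqodd odd_one).mul_left s
  have h2 := count_two p m s t d hp hp3 hm hs ht hd F hF2
  have hneg := count_neg d hdeven F
  have hmul : t * (t - 1) = t ^ 2 - t := by
    cases t with
    | zero => rfl
    | succ t' =>
      have h : (t' + 1) ^ 2 = (t' + 1) * t' + (t' + 1) := by ring
      rw [Nat.add_sub_cancel, h, Nat.add_sub_cancel]
  constructor
  · intro hndvd
    have hA := count_A_nondvd p m s t hp hp3 hm hs ht F hF2 hndvd
    constructor
    · rw [h2, hA, zero_mul]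
    · rw [hneg, h2, hA, zero_mul]
  · intro hdvd
    have hA := count_A_dvd p m s t hp hp3 hm hs ht F hF2 hdvd
    constructor
    · rw [h2, hA, hmul]
    · rw [hneg, h2, hA, hmul]
end

section
/- Let p > 3 be prime, n = 2m, d = s(p^m − 1) with gcd(s, p^m + 1) = t, (p^m + 1)/t > 3, and 2t ∤ p^m + 1. Then the differential spectrum of f(x) = x^d over F_{p^n} is: ω_0 = (t^2·p^n − (p^m + 2 − t)·p^m − 3t^2 + t − 1)/t^2, ω_{t^2} = (p^{2m} + (2 − 3t)·p^m + 2t^2 − 3t + 1)/t^2, ω_{t^2−t} = 2(p^m − t + 1)/t, ω_1 = 2, ω_{t(p^m−1)−1} = 1, all other ω_i zero. -/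
open Finset

set_option linter.unusedSectionVars false

section Aux
variable {F : Type} [Field F] [Fintype F] [DecidableEq F]

lemma root_count {k : ℕ} (hk : 0 < k) (hdvd : k ∣ Fintype.card F - 1) :
    (Finset.univ.filter fun x : F => x ^ k = 1).card = k := by
  obtain ⟨g, hg⟩ := IsCyclic.exists_generator (α := Fˣ)
  have hord : orderOf g = Fintype.card F - 1 := by
    rw [orderOf_eq_card_of_forall_mem_zpowers hg, Nat.card_eq_fintype_card, Fintype.card_units]
  have hζu : orderOf (g ^ ((Fintype.card F - 1) / k)) = k := by
    rw [orderOf_pow, hord, Nat.gcd_eq_right (Nat.div_dvd_of_dvd hdvd),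
      Nat.div_div_self hdvd (by have := Fintype.one_lt_card (α := F); omega)]
  have hprim : IsPrimitiveRoot ((g ^ ((Fintype.card F - 1) / k) : Fˣ) : F) k := by
    have := IsPrimitiveRoot.orderOf ((g ^ ((Fintype.card F - 1) / k) : Fˣ) : F)
    rwa [orderOf_units, hζu] at this
  have : (Finset.univ.filter fun x : F => x ^ k = 1) = Polynomial.nthRootsFinset k (1 : F) := by
    ext x; simp [Polynomial.mem_nthRootsFinset hk]
  rw [this, hprim.card_nthRootsFinset]

lemma root_count_gcd {k : ℕ} (hk : 0 < k) :
    (Finset.univ.filter fun x : F => x ^ k = 1).card = Nat.gcd k (Fintype.card F - 1) := by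
  have h1 : 0 < Fintype.card F - 1 := by have := Fintype.one_lt_card (α := F); omega
  have hg : 0 < Nat.gcd k (Fintype.card F - 1) := Nat.gcd_pos_of_pos_left _ hk
  have heq : (Finset.univ.filter fun x : F => x ^ k = 1)
      = (Finset.univ.filter fun x : F => x ^ (Nat.gcd k (Fintype.card F - 1)) = 1) := by
    ext x
    simp only [mem_filter, mem_univ, true_and]
    constructor
    · intro hx
      have hx0 : x ≠ 0 := by
        intro h; rw [h] at hx; simp [zero_pow hk.ne'] at hx
      have h2 : x ^ (Fintype.card F - 1) = 1 := FiniteField.pow_card_sub_one_eq_one x hx0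
      exact orderOf_dvd_iff_pow_eq_one.mp
        (Nat.dvd_gcd (orderOf_dvd_of_pow_eq_one hx) (orderOf_dvd_of_pow_eq_one h2))
    · intro hx
      obtain ⟨c, hc⟩ := Nat.gcd_dvd_left k (Fintype.card F - 1)
      rw [hc, pow_mul, hx, one_pow]
  rw [heq, root_count hg (Nat.gcd_dvd_right _ _)]

end Aux

def Del (F : Type) [Field F] [Fintype F] [DecidableEq F] (d : ℕ) (b : F) : ℕ :=
  (Finset.univ.filter fun x : F => (x + 1) ^ d - x ^ d = b).card

structure MySetup (F : Type) [Field F] [Fintype F] (q s t N d : ℕ) : Prop where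
  frob : ∀ x y : F, (x + y) ^ q = x ^ q + y ^ q
  hF : Fintype.card F = q ^ 2
  hq5 : 5 ≤ q
  hqodd : Odd q
  ht2 : 2 ≤ t
  hts : t ∣ s
  hst : Nat.gcd s (q + 1) = t
  htN : q + 1 = t * N
  hNodd : Odd N
  hN4 : 4 ≤ N
  hd : d = s * (q - 1)
  hs : 0 < s
  hone : (-1 : F) ≠ 1

namespace MySetup
variable {F : Type} [Field F] [Fintype F] [DecidableEq F] {q s t N d : ℕ}
variable (h : MySetup F q s t N d)

section basic
include h

lemma qq1 : q ^ 2 - 1 = (q - 1) * (q + 1) := by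
  have h5 := h.hq5
  obtain ⟨a, rfl⟩ : ∃ a, q = a + 1 := ⟨q - 1, by omega⟩
  have e1 : (a + 1) ^ 2 = a * a + 2 * a + 1 := by ring
  have e2 : a * (a + 1 + 1) = a * a + 2 * a := by ring
  simp only [Nat.add_sub_cancel]
  omega

lemma roots {k : ℕ} (hk : 0 < k) (hdvd : k ∣ q ^ 2 - 1) :
    (Finset.univ.filter fun x : F => x ^ k = 1).card = k := by
  apply root_count hk; rw [h.hF]; exact hdvd

lemma tq1 : t ∣ q + 1 := ⟨N, h.htN⟩
lemma Nq1 : N ∣ q + 1 := ⟨t, by rw [h.htN]; ring⟩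
lemma q1dvd : q + 1 ∣ q ^ 2 - 1 := h.qq1 ▸ Dvd.intro_left _ rfl
lemma cardU : (Finset.univ.filter fun x : F => x ^ (q + 1) = 1).card = q + 1 :=
  h.roots (by omega) h.q1dvd
lemma cardV : (Finset.univ.filter fun x : F => x ^ N = 1).card = N :=
  h.roots (by have := h.hN4; omega) (dvd_trans h.Nq1 h.q1dvd)
lemma cardW : (Finset.univ.filter fun x : F => x ^ t = 1).card = t :=
  h.roots (by have := h.ht2; omega) (dvd_trans h.tq1 h.q1dvd)

lemma cardS : (Finset.univ.filter fun x : F => x ^ q = x).card = q := by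
  classical
  have h5 := h.hq5
  have hsplit : (Finset.univ.filter fun x : F => x ^ q = x)
      = insert (0 : F) (Finset.univ.filter fun x : F => x ^ (q - 1) = 1) := by
    ext x
    simp only [mem_filter, mem_univ, true_and, mem_insert]
    constructor
    · intro hx
      rcases eq_or_ne x 0 with h0 | h0
      · exact Or.inl h0
      · right
        have e : x ^ (q - 1) * x = x ^ q := by
          rw [← pow_succ]; congr 1; omega
        rw [hx] at e
        have := mul_right_cancel₀ h0 (e.trans (one_mul x).symm)
        exact this
    · rintro (rfl | hx)
      · rw [zero_pow (by omega)]
      · have e : x ^ q = x ^ (q - 1) * x := by rw [← pow_succ]; congr 1; omega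
        rw [e, hx, one_mul]
  rw [hsplit, Finset.card_insert_of_notMem (by
    simp only [mem_filter, mem_univ, true_and]
    rw [zero_pow (by omega)]; exact fun hc => one_ne_zero hc.symm)]
  rw [h.roots (k := q - 1) (by omega) (h.qq1 ▸ Dvd.intro _ rfl)]
  omega

end basic

section alg
include h

lemma subq (x y : F) : (x - y) ^ q = x ^ q - y ^ q := by
  rw [sub_eq_add_neg, h.frob, h.hqodd.neg_pow, sub_eq_add_neg]

lemma circ {u v : F} (hu : u ^ (q + 1) = 1) (hv : v ^ (q + 1) = 1) :
    u * v * (u - v) ^ q = v - u := by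
  have hu' : u ^ q * u = 1 := by rw [← pow_succ]; exact hu
  have hv' : v ^ q * v = 1 := by rw [← pow_succ]; exact hv
  rw [subq h]
  have : u * v * (u ^ q - v ^ q) = (u ^ q * u) * v - (v ^ q * v) * u := by ring
  rw [this, hu', hv', one_mul, one_mul]

lemma VtoU {x : F} (hx : x ^ N = 1) : x ^ (q + 1) = 1 := by
  rw [h.htN, mul_comm, pow_mul, hx, one_pow]

lemma Vne0 {x : F} (hx : x ^ N = 1) : x ≠ 0 := by
  intro h0; rw [h0] at hx
  have hN0 : N ≠ 0 := by rintro rfl; exact (by simpa using h.hNodd : False)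
  rw [zero_pow hN0] at hx; exact one_ne_zero hx.symm

lemma neg_one_pow_N : (-1 : F) ^ N = -1 := by rw [h.hNodd.neg_pow, one_pow]

lemma neg_notV {u v : F} (hu : u ^ N = 1) (hv : v ^ N = 1) : u ≠ -v := by
  intro he
  have e : u ^ N = -(v ^ N) := by rw [he, h.hNodd.neg_pow]
  rw [hu, hv] at e
  exact h.hone e.symm

lemma prod_notV {u v : F} (hu : u ^ N = 1) (hv : v ^ N = 1) : u * v ≠ -1 := by
  intro he
  have : (u * v) ^ N = 1 := by rw [mul_pow, hu, hv, mul_one]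
  rw [he, neg_one_pow_N h] at this
  exact h.hone this

lemma uniqV {u v u' v' : F} (hu : u ^ N = 1) (hv : v ^ N = 1) (hu' : u' ^ N = 1)
    (hv' : v' ^ N = 1) (heq : u - v = u' - v') (hb : u - v ≠ 0) : u = u' ∧ v = v' := by
  have c1 := circ h (VtoU h hu) (VtoU h hv)
  have c2 := circ h (VtoU h hu') (VtoU h hv')
  rw [← heq] at c2
  have hbq : (u - v) ^ q ≠ 0 := pow_ne_zero _ hb
  have hm : u * v = u' * v' := by
    have h2 : u * v * (u - v) ^ q = u' * v' * (u - v) ^ q := by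
      rw [c1, c2]; linear_combination -heq
    exact mul_right_cancel₀ hbq h2
  have hz : (u - u') * (u + v') = 0 := by linear_combination u * heq + hm
  rcases mul_eq_zero.mp hz with h1 | h1
  · have huu : u = u' := sub_eq_zero.mp h1
    exact ⟨huu, by linear_combination huu - heq⟩
  · exact absurd (eq_neg_of_add_eq_zero_left h1) (neg_notV h hu hv')

lemma no_rep_one {u v : F} (hu : u ^ N = 1) (hv : v ^ N = 1) (c : F) (hc : c = 1 ∨ c = -1) :
    u - v ≠ c := by
  intro he
  have hcq : c ^ q = c := by
    rcases hc with rfl | rfl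
    · exact one_pow q
    · rw [h.hqodd.neg_pow, one_pow]
  have hc0 : c ≠ 0 := by rcases hc with rfl | rfl <;> simp
  have hcirc := circ h (VtoU h hu) (VtoU h hv)
  rw [he, hcq] at hcirc
  have huv : u * v = -1 := by
    have h2 : (u * v + 1) * c = 0 := by linear_combination hcirc - he
    rcases mul_eq_zero.mp h2 with h3 | h3
    · linear_combination h3
    · exact absurd h3 hc0
  exact prod_notV h hu hv huv

lemma powsV {μ : F} (hμ : μ ^ (q + 1) = 1) : (μ ^ s) ^ N = 1 := by
  obtain ⟨s', rfl⟩ := h.hts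
  rw [← pow_mul]
  have : t * s' * N = (q + 1) * s' := by rw [h.htN]; ring
  rw [this, pow_mul, hμ, one_pow]


end alg

section fiber
include h

lemma Wmem {ζ : F} (hζ : ζ ^ t = 1) : ζ ^ (q + 1) = 1 ∧ ζ ^ s = 1 := by
  obtain ⟨s', rfl⟩ := h.hts
  constructor
  · rw [h.htN, pow_mul, hζ, one_pow]
  · rw [pow_mul, hζ, one_pow]

lemma Wmem' {ζ : F} (h1 : ζ ^ (q + 1) = 1) (h2 : ζ ^ s = 1) : ζ ^ t = 1 := by
  have hd1 : orderOf ζ ∣ s := orderOf_dvd_of_pow_eq_one h2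
  have hd2 : orderOf ζ ∣ q + 1 := orderOf_dvd_of_pow_eq_one h1
  have : orderOf ζ ∣ t := h.hst ▸ Nat.dvd_gcd hd1 hd2
  exact orderOf_dvd_iff_pow_eq_one.mp this

lemma fib_nonempty {v : F} (hv : v ^ N = 1) {μ₀ : F} (h0 : μ₀ ^ (q + 1) = 1)
    (h0s : μ₀ ^ s = v) :
    (Finset.univ.filter fun μ : F => μ ^ (q + 1) = 1 ∧ μ ^ s = v).card = t := by
  have hμ0 : μ₀ ≠ 0 := by
    intro hz; rw [hz, zero_pow (by omega : q + 1 ≠ 0)] at h0; exact one_ne_zero h0.symm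
  rw [← h.cardW]
  apply Finset.card_bij (fun μ _ => μ₀⁻¹ * μ)
  · intro μ hμ
    simp only [mem_filter, mem_univ, true_and] at hμ ⊢
    apply Wmem' h
    · rw [mul_pow, inv_pow, h0, hμ.1, inv_one, one_mul]
    · rw [mul_pow, inv_pow, h0s, hμ.2, inv_mul_cancel₀ (by
        intro hz; rw [hz, zero_pow (by have := h.hN4; omega : N ≠ 0)] at hv
        exact one_ne_zero hv.symm)]
  · intro a ha b hb hab
    exact mul_left_cancel₀ (inv_ne_zero hμ0) hab
  · intro ζ hζ
    simp only [mem_filter, mem_univ, true_and] at hζ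
    refine ⟨μ₀ * ζ, ?_, by rw [← mul_assoc, inv_mul_cancel₀ hμ0, one_mul]⟩
    simp only [mem_filter, mem_univ, true_and]
    obtain ⟨hζ1, hζ2⟩ := Wmem h hζ
    exact ⟨by rw [mul_pow, h0, hζ1, one_mul], by rw [mul_pow, h0s, hζ2, mul_one]⟩

lemma fib {v : F} (hv : v ^ N = 1) :
    (Finset.univ.filter fun μ : F => μ ^ (q + 1) = 1 ∧ μ ^ s = v).card = t := by
  classical
  set Vf := Finset.univ.filter fun x : F => x ^ N = 1 with hVf
  set Uf := Finset.univ.filter fun x : F => x ^ (q + 1) = 1 with hUf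
  have hmap : ∀ μ ∈ Uf, μ ^ s ∈ Vf := by
    intro μ hμ; simp only [hUf, hVf, mem_filter, mem_univ, true_and] at *
    exact powsV h hμ
  have hsum : Uf.card = ∑ v ∈ Vf, (Uf.filter fun μ => μ ^ s = v).card :=
    Finset.card_eq_sum_card_fiberwise hmap
  have hfib_eq : ∀ w : F, (Uf.filter fun μ => μ ^ s = w)
      = Finset.univ.filter fun μ : F => μ ^ (q + 1) = 1 ∧ μ ^ s = w := by
    intro w; rw [hUf, Finset.filter_filter]
  have hle : ∀ w ∈ Vf, (Uf.filter fun μ => μ ^ s = w).card ≤ t := by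
    intro w hw
    rcases Finset.eq_empty_or_nonempty (Uf.filter fun μ => μ ^ s = w) with he | ⟨μ₀, hμ₀⟩
    · rw [he]; simp
    · simp only [hUf, mem_filter, mem_univ, true_and] at hμ₀
      simp only [hVf, mem_filter, mem_univ, true_and] at hw
      rw [hfib_eq, fib_nonempty h hw hμ₀.1 hμ₀.2]
  by_contra hne
  have hlt : (Uf.filter fun μ => μ ^ s = v).card < t := by
    rw [hfib_eq] at *
    have := hle v (by simp [hVf, mem_filter, hv])
    rw [hfib_eq] at this
    omega
  have hVmem : v ∈ Vf := by simp [hVf, mem_filter, hv]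
  have : ∑ w ∈ Vf, (Uf.filter fun μ => μ ^ s = w).card < ∑ w ∈ Vf, t :=
    Finset.sum_lt_sum hle ⟨v, hVmem, hlt⟩
  rw [Finset.sum_const, smul_eq_mul] at this
  have hcards : Uf.card = q + 1 := h.cardU
  have hcardV : Vf.card = N := h.cardV
  rw [← hsum, hcards, hcardV] at this
  have htn := h.htN
  have hmc : N * t = t * N := mul_comm N t
  omega

end fiber

section dels
include h

lemma dpos : 0 < d := by
  have h5 := h.hq5; have hs := h.hs
  rw [h.hd]; exact Nat.mul_pos hs (by omega)

lemma deven : Even d := by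
  rw [h.hd]
  apply Even.mul_left
  obtain ⟨r, hr⟩ := h.hqodd
  exact ⟨r, by omega⟩

lemma del0 : Del F d 0 = t * (q - 1) - 1 := by
  classical
  have h5 := h.hq5
  have hd0 := h.dpos
  have hT : ((Finset.univ.filter fun y : F => y ^ d = 1).erase 1).card = t * (q - 1) - 1 := by
    rw [Finset.card_erase_of_mem (by simp), root_count_gcd hd0, h.hF, h.qq1, h.hd,
      mul_comm s (q - 1), Nat.gcd_mul_left, h.hst, mul_comm (q-1) t]
  rw [← hT, Del]
  apply Finset.card_bij (fun x _ => (x + 1) * x⁻¹)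
  · intro x hx
    simp only [mem_filter, mem_univ, true_and, sub_eq_zero] at hx
    have hx0 : x ≠ 0 := by
      rintro rfl
      rw [zero_pow hd0.ne', zero_add, one_pow] at hx
      exact one_ne_zero hx
    have hx1 : x ≠ -1 := by
      rintro rfl
      rw [neg_add_cancel, zero_pow hd0.ne', h.deven.neg_one_pow] at hx
      exact one_ne_zero hx.symm
    simp only [mem_erase, mem_filter, mem_univ, true_and]
    constructor
    · intro hc
      have h2 : x + 1 = x := by
        calc x + 1 = (x + 1) * x⁻¹ * x := by field_simp
        _ = 1 * x := by rw [hc]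
        _ = x := one_mul x
      simp at h2
    · rw [mul_pow, inv_pow, hx, mul_inv_cancel₀ (pow_ne_zero _ hx0)]
  · intro a ha b hb hab
    simp only [mem_filter, mem_univ, true_and, sub_eq_zero] at ha hb
    have ha0 : a ≠ 0 := by
      rintro rfl; rw [zero_pow hd0.ne', zero_add, one_pow] at ha; exact one_ne_zero ha
    have hb0 : b ≠ 0 := by
      rintro rfl; rw [zero_pow hd0.ne', zero_add, one_pow] at hb; exact one_ne_zero hb
    field_simp at hab
    linear_combination -hab
  · intro y hy
    simp only [mem_erase, mem_filter, mem_univ, true_and] at hy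
    obtain ⟨hy1, hyd⟩ := hy
    have hy0 : y ≠ 0 := by
      rintro rfl; rw [zero_pow hd0.ne'] at hyd; exact one_ne_zero hyd.symm
    have hsub : y - 1 ≠ 0 := sub_ne_zero.mpr hy1
    refine ⟨(y - 1)⁻¹, ?_, ?_⟩
    · simp only [mem_filter, mem_univ, true_and, sub_eq_zero]
      have hx0 : (y - 1)⁻¹ ≠ 0 := inv_ne_zero hsub
      have he : (y - 1)⁻¹ + 1 = y * (y - 1)⁻¹ := by field_simp; ring
      rw [he, mul_pow, hyd, one_mul]
    · have he : (y - 1)⁻¹ + 1 = y * (y - 1)⁻¹ := by field_simp; ring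
      rw [he]
      field_simp

end dels

section bij
include h

lemma powq2 {x : F} (hx : x ≠ 0) : x ^ (q ^ 2 - 1) = 1 := by
  have e := FiniteField.pow_card_sub_one_eq_one x hx
  rwa [h.hF] at e

lemma Umem {x : F} (hx : x ≠ 0) : (x ^ (q - 1)) ^ (q + 1) = 1 := by
  rw [← pow_mul, ← h.qq1, powq2 h hx]

lemma powq_eq (x : F) : x ^ (q - 1) * x = x ^ q := by
  have h5 := h.hq5
  rw [← pow_succ]; congr 1; omega

lemma xd_eq (x : F) : x ^ d = (x ^ (q - 1)) ^ s := by
  rw [h.hd, mul_comm, pow_mul]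

lemma frob1 (x : F) : (x + 1) ^ q = x ^ q + 1 := by
  rw [h.frob, one_pow]

lemma Sval {x : F} (hfix : x ^ q = x) :
    (x + 1) ^ d - x ^ d = if x = 0 then 1 else if x = -1 then -1 else 0 := by
  have hd0 := h.dpos
  split_ifs with h0 h1
  · subst h0; rw [zero_pow hd0.ne', zero_add, one_pow, sub_zero]
  · subst h1; rw [neg_add_cancel, zero_pow hd0.ne', h.deven.neg_one_pow, zero_sub]
  · have hx0 : x ≠ 0 := h0
    have hx10 : x + 1 ≠ 0 := fun hc => h1 (eq_neg_of_add_eq_zero_left hc)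
    have e1 : x ^ (q - 1) = 1 := by
      have := powq_eq h x
      rw [hfix] at this
      exact mul_right_cancel₀ hx0 (this.trans (one_mul x).symm)
    have e2 : (x + 1) ^ (q - 1) = 1 := by
      have hfix2 : (x + 1) ^ q = x + 1 := by rw [frob1 h, hfix]
      have := powq_eq h (x + 1)
      rw [hfix2] at this
      exact mul_right_cancel₀ hx10 (this.trans (one_mul (x+1)).symm)
    rw [xd_eq h, xd_eq h, e1, e2, one_pow, sub_self]

lemma nonSpart (b : F) :
    (Finset.univ.filter fun x : F => ((x + 1) ^ d - x ^ d = b) ∧ x ^ q ≠ x).card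
      = (Finset.univ.filter fun z : F × F =>
          z.1 ^ (q + 1) = 1 ∧ z.2 ^ (q + 1) = 1 ∧ z.1 ≠ 1 ∧ z.2 ≠ 1 ∧ z.1 ≠ z.2
            ∧ z.2 ^ s - z.1 ^ s = b).card := by
  have h5 := h.hq5
  apply Finset.card_bij (fun x _ => (x ^ (q - 1), (x + 1) ^ (q - 1)))
  · intro x hx
    simp only [mem_filter, mem_univ, true_and] at hx
    obtain ⟨hval, hfix⟩ := hx
    have hx0 : x ≠ 0 := by rintro rfl; exact hfix (zero_pow (by omega))
    have hx1 : x ≠ -1 := by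
      rintro rfl; apply hfix; rw [h.hqodd.neg_pow, one_pow]
    have hx10 : x + 1 ≠ 0 := fun hc => hx1 (eq_neg_of_add_eq_zero_left hc)
    have e1 := powq_eq h x
    have e2 := powq_eq h (x + 1)
    have e4 := frob1 h x
    simp only [mem_filter, mem_univ, true_and]
    have c3 : x ^ (q - 1) ≠ 1 := by
      intro hc; apply hfix; rw [← e1, hc, one_mul]
    have c4 : (x + 1) ^ (q - 1) ≠ 1 := by
      intro hc; apply hfix
      have : (x + 1) ^ q = x + 1 := by rw [← e2, hc, one_mul]
      rw [e4] at this; linear_combination this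
    refine ⟨Umem h hx0, Umem h hx10, c3, c4, ?_, ?_⟩
    · intro hc
      apply c3
      rw [hc] at e1
      have : (x + 1) ^ (q - 1) = 1 := by linear_combination e2 - e1 + e4
      rw [← hc] at this; exact this
    · rw [← xd_eq h, ← xd_eq h, hval]
  · intro x hx x' hx' hab
    simp only [mem_filter, mem_univ, true_and] at hx hx'
    obtain ⟨hval, hfix⟩ := hx
    obtain ⟨hval', hfix'⟩ := hx'
    have hx0 : x ≠ 0 := by rintro rfl; exact hfix (zero_pow (by omega))
    have hx0' : x' ≠ 0 := by rintro rfl; exact hfix' (zero_pow (by omega))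
    have hμ := congrArg Prod.fst hab
    have hν := congrArg Prod.snd hab
    simp only at hμ hν
    -- linear relations
    have e1 := powq_eq h x
    have e2 := powq_eq h (x + 1)
    have e4 := frob1 h x
    have e1' := powq_eq h x'
    have e2' := powq_eq h (x' + 1)
    have e4' := frob1 h x'
    set μ := x ^ (q - 1) with hμdef
    set ν := (x + 1) ^ (q - 1) with hνdef
    have c3 : μ ≠ 1 := by
      intro hc; apply hfix; rw [← e1, hc, one_mul]
    have hμν : μ ≠ ν := by
      intro hc
      apply c3
      rw [← hc] at e2
      linear_combination e2 - e1 + e4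
    have r1 : x * (μ - ν) = ν - 1 := by
      linear_combination e1 - e2 - e4
    rw [← hμ] at e1'
    rw [← hν] at e2'
    have r2 : x' * (μ - ν) = ν - 1 := by
      linear_combination e1' - e2' - e4'
    have : (x - x') * (μ - ν) = 0 := by linear_combination r1 - r2
    rcases mul_eq_zero.mp this with hz | hz
    · exact sub_eq_zero.mp hz
    · exact absurd (sub_eq_zero.mp hz) hμν
  · rintro ⟨μ, ν⟩ hz
    simp only [mem_filter, mem_univ, true_and] at hz
    obtain ⟨hμU, hνU, hμ1, hν1, hμν, hval⟩ := hz
    have hμ0 : μ ≠ 0 := by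
      rintro rfl; rw [zero_pow (by omega : q + 1 ≠ 0)] at hμU; exact one_ne_zero hμU.symm
    have hν0 : ν ≠ 0 := by
      rintro rfl; rw [zero_pow (by omega : q + 1 ≠ 0)] at hνU; exact one_ne_zero hνU.symm
    have hμq : μ ^ q * μ = 1 := by rw [← pow_succ]; exact hμU
    have hνq : ν ^ q * ν = 1 := by rw [← pow_succ]; exact hνU
    have hsub : μ - ν ≠ 0 := sub_ne_zero.mpr hμν
    set x := (ν - 1) * (μ - ν)⁻¹ with hxdef
    have hx0 : x ≠ 0 := mul_ne_zero (sub_ne_zero.mpr hν1) (inv_ne_zero hsub)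
    have hr : x * (μ - ν) = ν - 1 := by
      rw [hxdef]; field_simp
    -- x ^ q = μ * x
    have hxq : x ^ q = μ * x := by
      have hsubq : (μ - ν) ^ q ≠ 0 := pow_ne_zero _ hsub
      apply mul_right_cancel₀ hsubq
      have e5 : x ^ q * (μ - ν) ^ q = (ν - 1) ^ q := by
        rw [← mul_pow, hr]
      rw [e5, subq h, subq h, one_pow]
      -- goal : ν^q - 1 = μ * x * (μ^q - ν^q)
      -- use hμq, hνq, hr
      have hμνne : μ * ν ≠ 0 := mul_ne_zero hμ0 hν0
      apply mul_left_cancel₀ hμνne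
      -- μν(ν^q −1) = μν μ x (μ^q − ν^q)
      linear_combination (μ + μ ^ 2 * x) * hνq - μ * ν * x * hμq + μ * hr
    have hxfix : x ^ q ≠ x := by
      rw [hxq]
      intro hc
      have : (μ - 1) * x = 0 := by linear_combination hc
      rcases mul_eq_zero.mp this with hz | hz
      · exact hμ1 (by linear_combination hz)
      · exact hx0 hz
    have hx1 : x + 1 ≠ 0 := by
      intro hc
      have hxm : x = -1 := eq_neg_of_add_eq_zero_left hc
      rw [hxm] at hxq
      have : μ = 1 := by
        rw [h.hqodd.neg_pow, one_pow] at hxq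
        linear_combination hxq
      exact hμ1 this
    have hμeq : x ^ (q - 1) = μ := by
      apply mul_right_cancel₀ hx0
      rw [powq_eq h, hxq]
    have hνeq : (x + 1) ^ (q - 1) = ν := by
      apply mul_right_cancel₀ hx1
      rw [powq_eq h, frob1 h, hxq]
      linear_combination hr
    refine ⟨x, ?_, by rw [hμeq, hνeq]⟩
    simp only [mem_filter, mem_univ, true_and]
    refine ⟨?_, hxfix⟩
    rw [xd_eq h, xd_eq h, hμeq, hνeq, hval]

end bij

section ppcount
include h

lemma prod_filter_card {P Q : F → Prop} [DecidablePred P] [DecidablePred Q] :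
    (Finset.univ.filter fun z : F × F => P z.1 ∧ Q z.2).card
      = (Finset.univ.filter P).card * (Finset.univ.filter Q).card := by
  rw [← Finset.card_product]
  congr 1
  ext z
  simp only [mem_filter, mem_univ, true_and, Finset.mem_product]

lemma cardKer1 :
    (Finset.univ.filter fun μ : F => μ ^ (q + 1) = 1 ∧ μ ^ s = 1 ∧ μ ≠ 1).card = t - 1 := by
  have hker : (Finset.univ.filter fun μ : F => μ ^ (q + 1) = 1 ∧ μ ^ s = 1 ∧ μ ≠ 1)
      = (Finset.univ.filter fun μ : F => μ ^ (q + 1) = 1 ∧ μ ^ s = 1).erase 1 := by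
    ext μ
    simp only [mem_filter, mem_univ, true_and, mem_erase]
    tauto
  rw [hker, Finset.card_erase_of_mem (by simp), fib h (one_pow N)]

lemma Sfix_card (b : F) (hb : b ≠ 0) :
    (Finset.univ.filter fun x : F => ((x + 1) ^ d - x ^ d = b) ∧ x ^ q = x).card
      = ((if b = 1 then 1 else 0) + (if b = -1 then 1 else 0)) := by
  have hone := h.hone
  have h1m : (1 : F) ≠ -1 := fun hc => hone hc.symm
  have hd0 := h.dpos
  by_cases hb1 : b = 1
  · subst hb1
    rw [if_pos rfl, if_neg h1m]
    have : (Finset.univ.filter fun x : F => ((x + 1) ^ d - x ^ d = 1) ∧ x ^ q = x) = {0} := by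
      ext x
      simp only [mem_filter, mem_univ, true_and, mem_singleton]
      constructor
      · rintro ⟨hval, hfix⟩
        rw [Sval h hfix] at hval
        split_ifs at hval with w1 w2
        · exact w1
        · exact absurd hval.symm h1m
        · exact absurd hval zero_ne_one
      · rintro rfl
        rw [zero_pow hd0.ne', zero_add, one_pow, sub_zero, zero_pow (by have := h.hq5; omega : q ≠ 0)]
        exact ⟨rfl, rfl⟩
    rw [this, Finset.card_singleton]
  · by_cases hb2 : b = -1
    · subst hb2
      rw [if_neg (fun hc => hone hc), if_pos rfl]
      have : (Finset.univ.filter fun x : F => ((x + 1) ^ d - x ^ d = -1) ∧ x ^ q = x) = {-1} := by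
        ext x
        simp only [mem_filter, mem_univ, true_and, mem_singleton]
        constructor
        · rintro ⟨hval, hfix⟩
          rw [Sval h hfix] at hval
          split_ifs at hval with w1 w2
          · exact absurd hval h1m
          · exact w2
          · exact absurd hval.symm (neg_ne_zero.mpr one_ne_zero)
        · rintro rfl
          rw [neg_add_cancel, zero_pow hd0.ne', h.deven.neg_one_pow, zero_sub, h.hqodd.neg_pow, one_pow]
          exact ⟨rfl, rfl⟩
      rw [this, Finset.card_singleton]
    · rw [if_neg hb1, if_neg hb2]
      have : (Finset.univ.filter fun x : F => ((x + 1) ^ d - x ^ d = b) ∧ x ^ q = x) = ∅ := by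
        rw [Finset.eq_empty_iff_forall_notMem]
        intro x hx
        simp only [mem_filter, mem_univ, true_and] at hx
        obtain ⟨hval, hfix⟩ := hx
        rw [Sval h hfix] at hval
        split_ifs at hval with w1 w2
        · exact hb1 hval.symm
        · exact hb2 hval.symm
        · exact hb (hval.symm)
      rw [this, Finset.card_empty]

lemma del_split (b : F) (hb : b ≠ 0) :
    Del F d b = ((if b = 1 then 1 else 0) + (if b = -1 then 1 else 0)) +
      (Finset.univ.filter fun z : F × F =>
          z.1 ^ (q + 1) = 1 ∧ z.2 ^ (q + 1) = 1 ∧ z.1 ≠ 1 ∧ z.2 ≠ 1 ∧ z.1 ≠ z.2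
            ∧ z.2 ^ s - z.1 ^ s = b).card := by
  classical
  have hsplit := Finset.card_filter_add_card_filter_not
    (s := Finset.univ.filter fun x : F => (x + 1) ^ d - x ^ d = b) (p := fun x => x ^ q = x)
  rw [Finset.filter_filter, Finset.filter_filter] at hsplit
  rw [Del, ← hsplit, Sfix_card h b hb, nonSpart h b]

lemma PP_nontriv {u v : F} (hu : u ^ N = 1) (hv : v ^ N = 1) (hu1 : u ≠ 1) (hv1 : v ≠ 1)
    (huv : u ≠ v) :
    (Finset.univ.filter fun z : F × F =>
        z.1 ^ (q + 1) = 1 ∧ z.2 ^ (q + 1) = 1 ∧ z.1 ≠ 1 ∧ z.2 ≠ 1 ∧ z.1 ≠ z.2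
          ∧ z.2 ^ s - z.1 ^ s = u - v).card = t * t := by
  have hb0 : u - v ≠ 0 := sub_ne_zero.mpr huv
  have hset : (Finset.univ.filter fun z : F × F =>
        z.1 ^ (q + 1) = 1 ∧ z.2 ^ (q + 1) = 1 ∧ z.1 ≠ 1 ∧ z.2 ≠ 1 ∧ z.1 ≠ z.2
          ∧ z.2 ^ s - z.1 ^ s = u - v)
      = Finset.univ.filter fun z : F × F =>
          (z.1 ^ (q + 1) = 1 ∧ z.1 ^ s = v) ∧ (z.2 ^ (q + 1) = 1 ∧ z.2 ^ s = u) := by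
    ext z
    simp only [mem_filter, mem_univ, true_and]
    constructor
    · rintro ⟨h1, h2, _, _, _, h6⟩
      obtain ⟨e1, e2⟩ := uniqV h (powsV h h2) (powsV h h1) hu hv h6 (h6.symm ▸ hb0)
      exact ⟨⟨h1, e2⟩, ⟨h2, e1⟩⟩
    · rintro ⟨⟨h1, e1⟩, ⟨h2, e2⟩⟩
      refine ⟨h1, h2, ?_, ?_, ?_, by rw [e1, e2]⟩
      · intro hc; rw [hc, one_pow] at e1; exact hv1 e1.symm
      · intro hc; rw [hc, one_pow] at e2; exact hu1 e2.symm
      · intro hc; rw [hc, e2] at e1; exact huv (e1.symm ▸ rfl)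
  have e := prod_filter_card h (P := fun a : F => a ^ (q + 1) = 1 ∧ a ^ s = v)
    (Q := fun a : F => a ^ (q + 1) = 1 ∧ a ^ s = u)
  rw [hset, e, fib h hv, fib h hu]

lemma PP_semi_u {u : F} (hu : u ^ N = 1) (hu1 : u ≠ 1) :
    (Finset.univ.filter fun z : F × F =>
        z.1 ^ (q + 1) = 1 ∧ z.2 ^ (q + 1) = 1 ∧ z.1 ≠ 1 ∧ z.2 ≠ 1 ∧ z.1 ≠ z.2
          ∧ z.2 ^ s - z.1 ^ s = u - 1).card = (t - 1) * t := by
  have hb0 : u - 1 ≠ 0 := sub_ne_zero.mpr hu1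
  have hset : (Finset.univ.filter fun z : F × F =>
        z.1 ^ (q + 1) = 1 ∧ z.2 ^ (q + 1) = 1 ∧ z.1 ≠ 1 ∧ z.2 ≠ 1 ∧ z.1 ≠ z.2
          ∧ z.2 ^ s - z.1 ^ s = u - 1)
      = Finset.univ.filter fun z : F × F =>
          (z.1 ^ (q + 1) = 1 ∧ z.1 ^ s = 1 ∧ z.1 ≠ 1) ∧ (z.2 ^ (q + 1) = 1 ∧ z.2 ^ s = u) := by
    ext z
    simp only [mem_filter, mem_univ, true_and]
    constructor
    · rintro ⟨h1, h2, h3, _, _, h6⟩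
      obtain ⟨e1, e2⟩ := uniqV h (powsV h h2) (powsV h h1) hu (one_pow N) h6 (h6.symm ▸ hb0)
      exact ⟨⟨h1, e2, h3⟩, ⟨h2, e1⟩⟩
    · rintro ⟨⟨h1, e1, h3⟩, ⟨h2, e2⟩⟩
      refine ⟨h1, h2, h3, ?_, ?_, by rw [e1, e2]⟩
      · intro hc; rw [hc, one_pow] at e2; exact hu1 e2.symm
      · intro hc; rw [← hc, e1] at e2; exact hu1 e2.symm
  have e := prod_filter_card h (P := fun a : F => a ^ (q + 1) = 1 ∧ a ^ s = 1 ∧ a ≠ 1)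
    (Q := fun a : F => a ^ (q + 1) = 1 ∧ a ^ s = u)
  rw [hset, e, cardKer1 h, fib h hu]

lemma PP_semi_v {v : F} (hv : v ^ N = 1) (hv1 : v ≠ 1) :
    (Finset.univ.filter fun z : F × F =>
        z.1 ^ (q + 1) = 1 ∧ z.2 ^ (q + 1) = 1 ∧ z.1 ≠ 1 ∧ z.2 ≠ 1 ∧ z.1 ≠ z.2
          ∧ z.2 ^ s - z.1 ^ s = 1 - v).card = t * (t - 1) := by
  have hb0 : (1 : F) - v ≠ 0 := sub_ne_zero.mpr (fun hc => hv1 hc.symm)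
  have hset : (Finset.univ.filter fun z : F × F =>
        z.1 ^ (q + 1) = 1 ∧ z.2 ^ (q + 1) = 1 ∧ z.1 ≠ 1 ∧ z.2 ≠ 1 ∧ z.1 ≠ z.2
          ∧ z.2 ^ s - z.1 ^ s = 1 - v)
      = Finset.univ.filter fun z : F × F =>
          (z.1 ^ (q + 1) = 1 ∧ z.1 ^ s = v) ∧ (z.2 ^ (q + 1) = 1 ∧ z.2 ^ s = 1 ∧ z.2 ≠ 1) := by
    ext z
    simp only [mem_filter, mem_univ, true_and]
    constructor
    · rintro ⟨h1, h2, _, h4, _, h6⟩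
      obtain ⟨e1, e2⟩ := uniqV h (powsV h h2) (powsV h h1) (one_pow N) hv h6 (h6.symm ▸ hb0)
      exact ⟨⟨h1, e2⟩, ⟨h2, e1, h4⟩⟩
    · rintro ⟨⟨h1, e1⟩, ⟨h2, e2, h4⟩⟩
      refine ⟨h1, h2, ?_, h4, ?_, by rw [e1, e2]⟩
      · intro hc; rw [hc, one_pow] at e1; exact hv1 e1.symm
      · intro hc; rw [hc, e2] at e1; exact hv1 e1.symm
  have e := prod_filter_card h (P := fun a : F => a ^ (q + 1) = 1 ∧ a ^ s = v)
    (Q := fun a : F => a ^ (q + 1) = 1 ∧ a ^ s = 1 ∧ a ≠ 1)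
  rw [hset, e, fib h hv]
  have : (Finset.univ.filter fun μ : F => μ ^ (q + 1) = 1 ∧ μ ^ s = 1 ∧ μ ≠ 1).card = t - 1 :=
    cardKer1 h
  rw [this]

lemma PP_empty {b : F} (hno : ∀ u v : F, u ^ N = 1 → v ^ N = 1 → u - v ≠ b) :
    (Finset.univ.filter fun z : F × F =>
        z.1 ^ (q + 1) = 1 ∧ z.2 ^ (q + 1) = 1 ∧ z.1 ≠ 1 ∧ z.2 ≠ 1 ∧ z.1 ≠ z.2
          ∧ z.2 ^ s - z.1 ^ s = b).card = 0 := by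
  rw [Finset.card_eq_zero, Finset.eq_empty_iff_forall_notMem]
  intro z hz
  simp only [mem_filter, mem_univ, true_and] at hz
  obtain ⟨h1, h2, _, _, _, h6⟩ := hz
  exact hno _ _ (powsV h h2) (powsV h h1) h6

end ppcount

section delvals
include h

lemma tt_sub : t * (t - 1) = t * t - t ∧ (t - 1) * t = t * t - t := by
  have h2 := h.ht2
  obtain ⟨k, rfl⟩ : ∃ k, t = k + 1 := ⟨t - 1, by omega⟩
  have e1 : (k + 1) * (k + 1) = (k + 1) * k + (k + 1) := by ring
  have e2 : (k + 1) * k = k * (k + 1) := by ring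
  simp only [Nat.add_sub_cancel]
  omega

lemma del_one : Del F d 1 = 1 := by
  rw [del_split h 1 one_ne_zero,
    PP_empty h (fun u v hu hv => no_rep_one h hu hv 1 (Or.inl rfl)),
    if_pos rfl, if_neg (fun hc => h.hone hc.symm)]

lemma del_negone : Del F d (-1) = 1 := by
  rw [del_split h (-1) (neg_ne_zero.mpr one_ne_zero),
    PP_empty h (fun u v hu hv => no_rep_one h hu hv (-1) (Or.inr rfl)),
    if_neg h.hone, if_pos rfl]

lemma del_nontriv {u v : F} (hu : u ^ N = 1) (hv : v ^ N = 1) (hu1 : u ≠ 1) (hv1 : v ≠ 1)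
    (huv : u ≠ v) : Del F d (u - v) = t * t := by
  have hb0 : u - v ≠ 0 := sub_ne_zero.mpr huv
  rw [del_split h _ hb0, if_neg (no_rep_one h hu hv 1 (Or.inl rfl)),
    if_neg (no_rep_one h hu hv (-1) (Or.inr rfl)), PP_nontriv h hu hv hu1 hv1 huv]
  omega

lemma del_semi_u {u : F} (hu : u ^ N = 1) (hu1 : u ≠ 1) : Del F d (u - 1) = t * t - t := by
  have hb0 : u - 1 ≠ 0 := sub_ne_zero.mpr hu1
  rw [del_split h _ hb0, if_neg (no_rep_one h hu (one_pow N) 1 (Or.inl rfl)),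
    if_neg (no_rep_one h hu (one_pow N) (-1) (Or.inr rfl)), PP_semi_u h hu hu1]
  rw [(tt_sub h).2]; omega

lemma del_semi_v {v : F} (hv : v ^ N = 1) (hv1 : v ≠ 1) : Del F d (1 - v) = t * t - t := by
  have hb0 : (1 : F) - v ≠ 0 := sub_ne_zero.mpr (fun hc => hv1 hc.symm)
  rw [del_split h _ hb0, if_neg (no_rep_one h (one_pow N) hv 1 (Or.inl rfl)),
    if_neg (no_rep_one h (one_pow N) hv (-1) (Or.inr rfl)), PP_semi_v h hv hv1]
  rw [(tt_sub h).1]; omega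

lemma del_none {b : F} (hb0 : b ≠ 0) (hb1 : b ≠ 1) (hbm : b ≠ -1)
    (hno : ∀ u v : F, u ^ N = 1 → v ^ N = 1 → u - v ≠ b) : Del F d b = 0 := by
  rw [del_split h b hb0, if_neg hb1, if_neg hbm, PP_empty h hno]

lemma classify (b : F) :
    b = 0 ∨ (b = 1 ∨ b = -1) ∨
    (∃ u v : F, u ^ N = 1 ∧ v ^ N = 1 ∧ u ≠ 1 ∧ v ≠ 1 ∧ u ≠ v ∧ b = u - v) ∨
    (∃ u : F, u ^ N = 1 ∧ u ≠ 1 ∧ (b = u - 1 ∨ b = 1 - u)) ∨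
    ((b ≠ 0 ∧ b ≠ 1 ∧ b ≠ -1) ∧ ∀ u v : F, u ^ N = 1 → v ^ N = 1 → u - v ≠ b) := by
  classical
  by_cases hb0 : b = 0
  · exact Or.inl hb0
  by_cases hb1 : b = 1
  · exact Or.inr (Or.inl (Or.inl hb1))
  by_cases hbm : b = -1
  · exact Or.inr (Or.inl (Or.inr hbm))
  by_cases hrep : ∃ u v : F, u ^ N = 1 ∧ v ^ N = 1 ∧ u - v = b
  · obtain ⟨u, v, hu, hv, huv⟩ := hrep
    have hne : u ≠ v := fun hc => hb0 (by rw [← huv, hc, sub_self])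
    by_cases hu1 : u = 1
    · subst hu1
      right; right; right; left
      exact ⟨v, hv, fun hc => hne hc.symm, Or.inr huv.symm⟩
    by_cases hv1 : v = 1
    · subst hv1
      right; right; right; left
      exact ⟨u, hu, hu1, Or.inl huv.symm⟩
    · right; right; left
      exact ⟨u, v, hu, hv, hu1, hv1, hne, huv.symm⟩
  · right; right; right; right
    exact ⟨⟨hb0, hb1, hbm⟩, fun u v hu hv hc => hrep ⟨u, v, hu, hv, hc⟩⟩

lemma del_vals (b : F) :
    Del F d b = 0 ∨ Del F d b = 1 ∨ Del F d b = t * t - t ∨ Del F d b = t * t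
      ∨ Del F d b = t * (q - 1) - 1 := by
  rcases classify h b with rfl | (rfl | rfl) | ⟨u, v, hu, hv, hu1, hv1, huv, rfl⟩
    | ⟨u, hu, hu1, (rfl | rfl)⟩ | ⟨⟨hb0, hb1, hbm⟩, hno⟩
  · exact Or.inr (Or.inr (Or.inr (Or.inr (del0 h))))
  · exact Or.inr (Or.inl (del_one h))
  · exact Or.inr (Or.inl (del_negone h))
  · exact Or.inr (Or.inr (Or.inr (Or.inl (del_nontriv h hu hv hu1 hv1 huv))))
  · exact Or.inr (Or.inr (Or.inl (del_semi_u h hu hu1)))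
  · exact Or.inr (Or.inr (Or.inl (del_semi_v h hu hu1)))
  · exact Or.inl (del_none h hb0 hb1 hbm hno)

end delvals

section counts
include h

lemma valfacts : (4 ≤ t * t) ∧ (2 ≤ t * t - t) ∧ (t * t - t ≠ t * t)
    ∧ (7 ≤ t * (q - 1) - 1) ∧ (t * (q - 1) - 1 ≠ t * t) ∧ (t * (q - 1) - 1 ≠ t * t - t) := by
  have h2 := h.ht2
  have h5 := h.hq5
  have e1 : 2 * 2 ≤ t * t := Nat.mul_le_mul h2 h2
  have e3 : 2 * t ≤ t * t := Nat.mul_le_mul_right t h2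
  have e2 : 2 * (q - 1) ≤ t * (q - 1) := Nat.mul_le_mul_right _ h2
  have e4 : t * q = t * (q - 1) + t := by
    obtain ⟨r, rfl⟩ : ∃ r, q = r + 1 := ⟨q - 1, by omega⟩
    simp only [Nat.add_sub_cancel]
    ring
  refine ⟨by omega, by omega, by omega, by omega, ?_, ?_⟩
  · intro heq
    have hd : t ∣ t * (q - 1) - t * t := Nat.dvd_sub (dvd_mul_right t (q - 1)) (dvd_mul_right t t)
    have h1 : t * (q - 1) - t * t = 1 := by omega
    rw [h1] at hd
    have := Nat.le_of_dvd one_pos hd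
    omega
  · intro heq
    have hd : t ∣ t * q - t * t := Nat.dvd_sub (dvd_mul_right t q) (dvd_mul_right t t)
    have h1 : t * q - t * t = 1 := by omega
    rw [h1] at hd
    have := Nat.le_of_dvd one_pos hd
    omega

lemma cardA : (Finset.univ.filter fun u : F => u ^ N = 1 ∧ u ≠ 1).card = N - 1 := by
  have he : (Finset.univ.filter fun u : F => u ^ N = 1 ∧ u ≠ 1)
      = (Finset.univ.filter fun u : F => u ^ N = 1).erase 1 := by
    ext u; simp only [mem_filter, mem_univ, true_and, mem_erase]; tauto
  rw [he, Finset.card_erase_of_mem (by simp), h.cardV]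

lemma cardD3 : ((Finset.univ.filter fun z : F × F =>
      z.1 ^ N = 1 ∧ z.2 ^ N = 1 ∧ z.1 ≠ 1 ∧ z.2 ≠ 1 ∧ z.1 ≠ z.2).image
        fun z => z.1 - z.2).card = (N - 1) * (N - 2) := by
  rw [Finset.card_image_of_injOn (by
    rintro ⟨u, v⟩ hz ⟨u', v'⟩ hw he
    simp only [mem_coe, mem_filter, mem_univ, true_and] at hz hw he
    obtain ⟨h1, h2, _, _, h5⟩ := hz
    obtain ⟨h1', h2', _, _, _⟩ := hw
    obtain ⟨e1, e2⟩ := uniqV h h1 h2 h1' h2' he (sub_ne_zero.mpr h5)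
    simp [Prod.ext_iff, e1, e2])]
  have hpair : (Finset.univ.filter fun z : F × F =>
        z.1 ^ N = 1 ∧ z.2 ^ N = 1 ∧ z.1 ≠ 1 ∧ z.2 ≠ 1 ∧ z.1 ≠ z.2)
      = ((Finset.univ.filter fun u : F => u ^ N = 1 ∧ u ≠ 1) ×ˢ
          (Finset.univ.filter fun u : F => u ^ N = 1 ∧ u ≠ 1)) \
        ((Finset.univ.filter fun u : F => u ^ N = 1 ∧ u ≠ 1).image fun a => (a, a)) := by
    ext z
    simp only [mem_sdiff, Finset.mem_product, mem_filter, mem_univ, true_and, mem_image]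
    constructor
    · rintro ⟨h1, h2, h3, h4, h5⟩
      refine ⟨⟨⟨h1, h3⟩, ⟨h2, h4⟩⟩, ?_⟩
      rintro ⟨a, _, rfl⟩
      exact h5 rfl
    · rintro ⟨⟨⟨h1, h3⟩, ⟨h2, h4⟩⟩, hnd⟩
      refine ⟨h1, h2, h3, h4, fun hc => hnd ⟨z.1, ⟨h1, h3⟩, ?_⟩⟩
      rw [Prod.ext_iff]
      exact ⟨rfl, hc⟩
  rw [hpair, Finset.card_sdiff_of_subset (by
    intro w hw
    simp only [mem_image] at hw
    obtain ⟨a, ha, rfl⟩ := hw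
    simp only [Finset.mem_product]
    exact ⟨ha, ha⟩)]
  rw [Finset.card_product, Finset.card_image_of_injective _ (fun a b hab => (Prod.ext_iff.mp hab).1),
    cardA h]
  have hN := h.hN4
  obtain ⟨k, rfl⟩ : ∃ k, N = k + 2 := ⟨N - 2, by omega⟩
  simp only [Nat.add_sub_cancel, show k + 2 - 1 = k + 1 by omega]
  have e : (k + 1) * (k + 1) = (k + 1) * k + (k + 1) := by ring
  omega

lemma cardD2 : (((Finset.univ.filter fun u : F => u ^ N = 1 ∧ u ≠ 1).image fun u => u - 1)
      ∪ ((Finset.univ.filter fun u : F => u ^ N = 1 ∧ u ≠ 1).image fun u => 1 - u)).card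
    = 2 * (N - 1) := by
  rw [Finset.card_union_of_disjoint (by
    rw [Finset.disjoint_left]
    intro w hw1 hw2
    simp only [mem_image, mem_filter, mem_univ, true_and] at hw1 hw2
    obtain ⟨u, ⟨hu, hu1⟩, rfl⟩ := hw1
    obtain ⟨v, ⟨hv, hv1⟩, he⟩ := hw2
    obtain ⟨e1, _⟩ := uniqV h hu (one_pow N) (one_pow N) hv he.symm (sub_ne_zero.mpr hu1)
    exact hu1 e1)]
  rw [Finset.card_image_of_injective _ (fun a b hab => by linear_combination hab),
    Finset.card_image_of_injective _ (fun a b hab => by linear_combination -hab),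
    cardA h]
  omega

end counts

section omegas
include h

lemma mem_D3_iff {b : F} : (b ∈ (Finset.univ.filter fun z : F × F =>
      z.1 ^ N = 1 ∧ z.2 ^ N = 1 ∧ z.1 ≠ 1 ∧ z.2 ≠ 1 ∧ z.1 ≠ z.2).image fun z => z.1 - z.2)
    ↔ ∃ u v : F, u ^ N = 1 ∧ v ^ N = 1 ∧ u ≠ 1 ∧ v ≠ 1 ∧ u ≠ v ∧ b = u - v := by
  simp only [mem_image, mem_filter, mem_univ, true_and]
  constructor
  · rintro ⟨⟨u, v⟩, ⟨h1, h2, h3, h4, h5⟩, rfl⟩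
    exact ⟨u, v, h1, h2, h3, h4, h5, rfl⟩
  · rintro ⟨u, v, h1, h2, h3, h4, h5, rfl⟩
    exact ⟨(u, v), ⟨h1, h2, h3, h4, h5⟩, rfl⟩

lemma mem_D2_iff {b : F} : (b ∈ ((Finset.univ.filter fun u : F => u ^ N = 1 ∧ u ≠ 1).image
      fun u => u - 1) ∪ ((Finset.univ.filter fun u : F => u ^ N = 1 ∧ u ≠ 1).image fun u => 1 - u))
    ↔ ∃ u : F, u ^ N = 1 ∧ u ≠ 1 ∧ (b = u - 1 ∨ b = 1 - u) := by
  simp only [Finset.mem_union, mem_image, mem_filter, mem_univ, true_and]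
  constructor
  · rintro (⟨u, ⟨h1, h2⟩, rfl⟩ | ⟨u, ⟨h1, h2⟩, rfl⟩)
    · exact ⟨u, h1, h2, Or.inl rfl⟩
    · exact ⟨u, h1, h2, Or.inr rfl⟩
  · rintro ⟨u, h1, h2, (rfl | rfl)⟩
    · exact Or.inl ⟨u, ⟨h1, h2⟩, rfl⟩
    · exact Or.inr ⟨u, ⟨h1, h2⟩, rfl⟩

lemma del_of_D3 {b : F} (hb : ∃ u v : F, u ^ N = 1 ∧ v ^ N = 1 ∧ u ≠ 1 ∧ v ≠ 1 ∧ u ≠ v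
    ∧ b = u - v) : Del F d b = t * t := by
  obtain ⟨u, v, h1, h2, h3, h4, h5, rfl⟩ := hb
  exact del_nontriv h h1 h2 h3 h4 h5

lemma del_of_D2 {b : F} (hb : ∃ u : F, u ^ N = 1 ∧ u ≠ 1 ∧ (b = u - 1 ∨ b = 1 - u)) :
    Del F d b = t * t - t := by
  obtain ⟨u, h1, h2, (rfl | rfl)⟩ := hb
  · exact del_semi_u h h1 h2
  · exact del_semi_v h h1 h2

lemma del_cases (b : F) :
    (b = 0 ∧ Del F d b = t * (q - 1) - 1)
    ∨ ((b = 1 ∨ b = -1) ∧ Del F d b = 1)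
    ∨ ((∃ u v : F, u ^ N = 1 ∧ v ^ N = 1 ∧ u ≠ 1 ∧ v ≠ 1 ∧ u ≠ v ∧ b = u - v)
        ∧ Del F d b = t * t)
    ∨ ((∃ u : F, u ^ N = 1 ∧ u ≠ 1 ∧ (b = u - 1 ∨ b = 1 - u)) ∧ Del F d b = t * t - t)
    ∨ (Del F d b = 0) := by
  rcases classify h b with rfl | (rfl | rfl) | hb | hb | ⟨⟨hb0, hb1, hbm⟩, hno⟩
  · exact Or.inl ⟨rfl, del0 h⟩
  · exact Or.inr (Or.inl ⟨Or.inl rfl, del_one h⟩)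
  · exact Or.inr (Or.inl ⟨Or.inr rfl, del_negone h⟩)
  · exact Or.inr (Or.inr (Or.inl ⟨hb, del_of_D3 h hb⟩))
  · exact Or.inr (Or.inr (Or.inr (Or.inl ⟨hb, del_of_D2 h hb⟩)))
  · exact Or.inr (Or.inr (Or.inr (Or.inr (del_none h hb0 hb1 hbm hno))))

lemma omegas :
    (Finset.univ.filter fun b : F => Del F d b = 1).card = 2
    ∧ (Finset.univ.filter fun b : F => Del F d b = t * (q - 1) - 1).card = 1
    ∧ (Finset.univ.filter fun b : F => Del F d b = t * t).card = (N - 1) * (N - 2)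
    ∧ (Finset.univ.filter fun b : F => Del F d b = t * t - t).card = 2 * (N - 1)
    ∧ (Finset.univ.filter fun b : F => Del F d b = 0).card
        = q ^ 2 - (3 + 2 * (N - 1) + (N - 1) * (N - 2))
    ∧ ∀ i : ℕ, i ≠ 0 → i ≠ 1 → i ≠ t * t - t → i ≠ t * t → i ≠ t * (q - 1) - 1 →
        (Finset.univ.filter fun b : F => Del F d b = i).card = 0 := by
  classical
  obtain ⟨v1, v2, v3, v4, v5, v6⟩ := valfacts h
  have hone := h.hone
  -- the two D-sets
  set D3 : Finset F := (Finset.univ.filter fun z : F × F =>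
      z.1 ^ N = 1 ∧ z.2 ^ N = 1 ∧ z.1 ≠ 1 ∧ z.2 ≠ 1 ∧ z.1 ≠ z.2).image fun z => z.1 - z.2 with hD3
  set D2 : Finset F := ((Finset.univ.filter fun u : F => u ^ N = 1 ∧ u ≠ 1).image fun u => u - 1)
      ∪ ((Finset.univ.filter fun u : F => u ^ N = 1 ∧ u ≠ 1).image fun u => 1 - u) with hD2
  have f1 : (Finset.univ.filter fun b : F => Del F d b = 1) = ({1, -1} : Finset F) := by
    ext b
    simp only [mem_filter, mem_univ, true_and, mem_insert, mem_singleton]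
    constructor
    · intro hb
      rcases del_cases h b with ⟨rfl, hv⟩ | ⟨hm, _⟩ | ⟨_, hv⟩ | ⟨_, hv⟩ | hv <;>
        first
          | (exact absurd (hv.symm.trans hb) (by omega))
          | (rcases hm with rfl | rfl
             · exact Or.inl rfl
             · exact Or.inr rfl)
    · rintro (rfl | rfl)
      · exact del_one h
      · exact del_negone h
  have f2 : (Finset.univ.filter fun b : F => Del F d b = t * (q - 1) - 1) = ({0} : Finset F) := by
    ext b
    simp only [mem_filter, mem_univ, true_and, mem_singleton]
    constructor
    · intro hb
      rcases del_cases h b with ⟨rfl, hv⟩ | ⟨_, hv⟩ | ⟨_, hv⟩ | ⟨_, hv⟩ | hv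
      · rfl
      all_goals exact absurd (hv.symm.trans hb) (by omega)
    · rintro rfl
      exact del0 h
  have f3 : (Finset.univ.filter fun b : F => Del F d b = t * t) = D3 := by
    ext b
    simp only [mem_filter, mem_univ, true_and]
    constructor
    · intro hb
      rcases del_cases h b with ⟨rfl, hv⟩ | ⟨_, hv⟩ | ⟨hm, _⟩ | ⟨_, hv⟩ | hv
      · exact absurd (hv.symm.trans hb) (by omega)
      · exact absurd (hv.symm.trans hb) (by omega)
      · exact (mem_D3_iff h).mpr hm
      · exact absurd (hv.symm.trans hb) (by omega)
      · exact absurd (hv.symm.trans hb) (by omega)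
    · intro hb
      exact del_of_D3 h ((mem_D3_iff h).mp hb)
  have f4 : (Finset.univ.filter fun b : F => Del F d b = t * t - t) = D2 := by
    ext b
    simp only [mem_filter, mem_univ, true_and]
    constructor
    · intro hb
      rcases del_cases h b with ⟨rfl, hv⟩ | ⟨_, hv⟩ | ⟨_, hv⟩ | ⟨hm, _⟩ | hv
      · exact absurd (hv.symm.trans hb) (by omega)
      · exact absurd (hv.symm.trans hb) (by omega)
      · exact absurd (hv.symm.trans hb) (by omega)
      · exact (mem_D2_iff h).mpr hm
      · exact absurd (hv.symm.trans hb) (by omega)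
    · intro hb
      exact del_of_D2 h ((mem_D2_iff h).mp hb)
  have c1 : ({1, -1} : Finset F).card = 2 := by
    rw [Finset.card_insert_of_notMem (by simp only [mem_singleton]; exact fun hc => hone hc.symm),
      Finset.card_singleton]
  have c3 : D3.card = (N - 1) * (N - 2) := cardD3 h
  have c4 : D2.card = 2 * (N - 1) := cardD2 h
  -- disjointness facts
  have hd12 : Disjoint ({0} : Finset F) ({1, -1} : Finset F) := by
    simp only [Finset.disjoint_left, mem_singleton, mem_insert]
    rintro a rfl hmem
    rcases hmem with hc | hc
    · exact one_ne_zero hc.symm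
    · exact (neg_ne_zero.mpr one_ne_zero) hc.symm
  have hd13 : Disjoint ({0} : Finset F) D2 := by
    simp only [Finset.disjoint_left, mem_singleton]
    rintro a rfl hmem
    obtain ⟨u, h1, h2, (hc | hc)⟩ := (mem_D2_iff h).mp hmem
    · exact h2 (by linear_combination -hc)
    · exact h2 (by linear_combination hc)
  have hd14 : Disjoint ({0} : Finset F) D3 := by
    simp only [Finset.disjoint_left, mem_singleton]
    rintro a rfl hmem
    obtain ⟨u, v, h1, h2, _, _, h5, hc⟩ := (mem_D3_iff h).mp hmem
    exact h5 (by linear_combination -hc)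
  have hd23 : Disjoint ({1, -1} : Finset F) D2 := by
    simp only [Finset.disjoint_left, mem_insert, mem_singleton]
    rintro a ha hmem
    obtain ⟨u, h1, h2, (rfl | rfl)⟩ := (mem_D2_iff h).mp hmem
    · exact no_rep_one h h1 (one_pow N) _ ha rfl
    · exact no_rep_one h (one_pow N) h1 _ ha rfl
  have hd24 : Disjoint ({1, -1} : Finset F) D3 := by
    simp only [Finset.disjoint_left, mem_insert, mem_singleton]
    rintro a ha hmem
    obtain ⟨u, v, h1, h2, _, _, _, rfl⟩ := (mem_D3_iff h).mp hmem
    exact no_rep_one h h1 h2 _ ha rfl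
  have hd34 : Disjoint D2 D3 := by
    simp only [Finset.disjoint_left]
    intro a hmem2 hmem3
    obtain ⟨u, h1, h2, hc⟩ := (mem_D2_iff h).mp hmem2
    obtain ⟨u', v', h1', h2', h3', h4', h5', rfl⟩ := (mem_D3_iff h).mp hmem3
    rcases hc with hc | hc
    · obtain ⟨_, e2⟩ := uniqV h h1' h2' h1 (one_pow N) (by linear_combination hc)
        (sub_ne_zero.mpr h5')
      exact h4' e2
    · obtain ⟨e1, _⟩ := uniqV h h1' h2' (one_pow N) h1 (by linear_combination hc)
        (sub_ne_zero.mpr h5')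
      exact h3' e1
  -- the good set
  set G : Finset F := ({0} : Finset F) ∪ (({1, -1} : Finset F) ∪ (D2 ∪ D3)) with hG
  have cG : G.card = 3 + 2 * (N - 1) + (N - 1) * (N - 2) := by
    rw [hG, Finset.card_union_of_disjoint (by
        refine Finset.disjoint_union_right.mpr ⟨hd12, Finset.disjoint_union_right.mpr ⟨hd13, hd14⟩⟩),
      Finset.card_union_of_disjoint (by
        refine Finset.disjoint_union_right.mpr ⟨hd23, hd24⟩),
      Finset.card_union_of_disjoint hd34, Finset.card_singleton, c1, c3, c4]
    omega
  have f5 : (Finset.univ.filter fun b : F => Del F d b = 0) = Finset.univ \ G := by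
    ext b
    simp only [mem_filter, mem_univ, true_and, Finset.mem_sdiff, hG, Finset.mem_union,
      mem_singleton, mem_insert]
    constructor
    · intro hb hmem
      rcases hmem with rfl | ((rfl | rfl) | (hmem | hmem))
      · rw [del0 h] at hb; omega
      · rw [del_one h] at hb; omega
      · rw [del_negone h] at hb; omega
      · rw [del_of_D2 h ((mem_D2_iff h).mp hmem)] at hb; omega
      · rw [del_of_D3 h ((mem_D3_iff h).mp hmem)] at hb; omega
    · intro hnb
      rcases del_cases h b with ⟨rfl, hv⟩ | ⟨hm, hv⟩ | ⟨hm, hv⟩ | ⟨hm, hv⟩ | hv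
      · exact absurd (Or.inl rfl) hnb
      · exact absurd (Or.inr (Or.inl hm)) hnb
      · exact absurd (Or.inr (Or.inr (Or.inr ((mem_D3_iff h).mpr hm)))) hnb
      · exact absurd (Or.inr (Or.inr (Or.inl ((mem_D2_iff h).mpr hm)))) hnb
      · exact hv
  have c5 : (Finset.univ.filter fun b : F => Del F d b = 0).card
      = q ^ 2 - (3 + 2 * (N - 1) + (N - 1) * (N - 2)) := by
    rw [f5, Finset.card_sdiff_of_subset (Finset.subset_univ G), cG, Finset.card_univ, h.hF]
  refine ⟨by rw [f1]; exact c1, by rw [f2]; exact Finset.card_singleton 0,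
    by rw [f3]; exact c3, by rw [f4]; exact c4, c5, ?_⟩
  · intro i hi0 hi1 hi2 hi3 hi4
    rw [Finset.card_eq_zero, Finset.eq_empty_iff_forall_notMem]
    intro b hb
    simp only [mem_filter, mem_univ, true_and] at hb
    rcases del_vals h b with hv | hv | hv | hv | hv <;> rw [hb] at hv
    · exact hi0 hv
    · exact hi1 hv
    · exact hi2 hv
    · exact hi3 hv
    · exact hi4 hv

end omegas

end MySetup

theorem stmt_13 (p m n s t d : ℕ) (hp : p.Prime) (hp3 : p > 3)
    (hm : 0 < m) (hn : n = 2 * m) (hs : 0 < s)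
    (ht : t = Nat.gcd s (p ^ m + 1)) (hbig : (p ^ m + 1) / t > 3)
    (h2t : ¬ (2 * t ∣ p ^ m + 1))
    (hd : d = s * (p ^ m - 1))
    (F : Type) [Field F] [Fintype F] [DecidableEq F] (hF : Fintype.card F = p ^ n)
    (ω : ℕ → ℕ)
    (hω : ∀ i, ω i = (Finset.univ.filter fun b : F =>
      (Finset.univ.filter fun x : F => (x + 1) ^ d - x ^ d = b).card = i).card) :
    ((t : ℤ) ^ 2) * ω 0 =
      (t : ℤ) ^ 2 * p ^ n - ((p : ℤ) ^ m + 2 - t) * p ^ m - 3 * t ^ 2 + t - 1 ∧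
    ((t : ℤ) ^ 2) * ω (t ^ 2) =
      (p : ℤ) ^ (2 * m) + (2 - 3 * (t : ℤ)) * p ^ m + 2 * t ^ 2 - 3 * t + 1 ∧
    (t : ℤ) * ω (t ^ 2 - t) = 2 * ((p : ℤ) ^ m - t + 1) ∧
    ω 1 = 2 ∧
    ω (t * (p ^ m - 1) - 1) = 1 ∧
    (∀ i, i ≠ 0 → i ≠ t ^ 2 → i ≠ t ^ 2 - t → i ≠ 1 →
      i ≠ t * (p ^ m - 1) - 1 → ω i = 0) := by
  classical
  set q : ℕ := p ^ m with hq
  set N : ℕ := (q + 1) / t with hN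
  -- basic numbers
  have hp5 : 5 ≤ p := by
    obtain ⟨r, hr⟩ := hp.odd_of_ne_two (by omega)
    omega
  have hq5 : 5 ≤ q := le_trans hp5 (Nat.le_self_pow hm.ne' p)
  have hqodd : Odd q := (hp.odd_of_ne_two (by omega)).pow
  have htpos : 0 < t := ht ▸ Nat.gcd_pos_of_pos_left _ hs
  have htdvd : t ∣ q + 1 := ht ▸ Nat.gcd_dvd_right s (q + 1)
  have htN : q + 1 = t * N := (Nat.mul_div_cancel' htdvd).symm
  have ht1 : t ≠ 1 := by
    intro h1
    apply h2t
    rw [h1, mul_one]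
    obtain ⟨r, hr⟩ := hqodd
    exact ⟨r + 1, by rw [hr]; ring⟩
  have ht2 : 2 ≤ t := by omega
  have hN4 : 4 ≤ N := by
    have := hbig
    omega
  have hNodd : Odd N := by
    rcases Nat.even_or_odd N with he | ho
    · exfalso
      obtain ⟨k, hk⟩ := he
      exact h2t ⟨k, by rw [htN, hk]; ring⟩
    · exact ho
  -- characteristic
  have hcard : Fintype.card F = q ^ 2 := by
    rw [hF, hn, hq, ← pow_mul, mul_comm 2 m]
  have hchar : CharP F p := by
    obtain ⟨r, hr⟩ := CharP.exists F
    haveI := hr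
    have hrp : r.Prime := CharP.char_is_prime F r
    obtain ⟨k, hkcard⟩ := FiniteField.card F r
    obtain ⟨hrp', hkc⟩ := hkcard
    have hpr : p = r := by
      have h1 : p ∣ r ^ (k : ℕ) := by
        rw [← hkc, hF, hn]
        exact dvd_pow_self p (by omega)
      have h2 : p ∣ r := hp.dvd_of_dvd_pow h1
      exact (Nat.prime_dvd_prime_iff_eq hp hrp').mp h2
    rwa [hpr]
  haveI := hchar
  haveI : Fact p.Prime := ⟨hp⟩
  have hone : (-1 : F) ≠ 1 := by
    intro hc
    have h2 : ((2 : ℕ) : F) = 0 := by push_cast; linear_combination -hc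
    have := (CharP.cast_eq_zero_iff F p 2).mp h2
    have := Nat.le_of_dvd (by omega) this
    omega
  have hfrob : ∀ x y : F, (x + y) ^ q = x ^ q + y ^ q := fun x y => add_pow_char_pow (R := F) (p := p) (n := m) (x := x) (y := y)
  -- the setup
  have H : MySetup F q s t N d :=
    ⟨hfrob, hcard, hq5, hqodd, ht2, ht ▸ Nat.gcd_dvd_left s (q + 1), ht.symm, htN, hNodd, hN4,
      hd, hs, hone⟩
  obtain ⟨W1, W2, W3, W4, W5, W6⟩ := MySetup.omegas H
  have hωDel : ∀ i, ω i = (Finset.univ.filter fun b : F => Del F d b = i).card := by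
    intro i
    rw [hω i]
    rfl
  have hqN : (q : ℤ) = (t : ℤ) * N - 1 := by
    have : ((q + 1 : ℕ) : ℤ) = ((t * N : ℕ) : ℤ) := by rw [htN]
    push_cast at this
    omega
  have hNcast1 : ((N - 1 : ℕ) : ℤ) = (N : ℤ) - 1 := by
    rw [Nat.cast_sub (by omega)]; norm_num
  have hNcast2 : ((N - 2 : ℕ) : ℤ) = (N : ℤ) - 2 := by
    rw [Nat.cast_sub (by omega)]; norm_num
  have hpm : ((q : ℕ) : ℤ) = (p : ℤ) ^ m := by push_cast [hq]; ring
  have hpn : (p : ℤ) ^ n = ((p : ℤ) ^ m) ^ 2 := by rw [hn, mul_comm 2 m, pow_mul]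
  have htt : t ^ 2 = t * t := by rw [pow_two]
  have htts : t ^ 2 - t = t * t - t := by rw [pow_two]
  -- the K ≤ q^2 inequality
  have hKle : 3 + 2 * (N - 1) + (N - 1) * (N - 2) ≤ q ^ 2 := by
    obtain ⟨k, hk⟩ : ∃ k, N = k + 2 := ⟨N - 2, by omega⟩
    have h1 : 2 * N ≤ t * N := Nat.mul_le_mul_right N ht2
    have h2 : 2 * k + 3 ≤ q := by omega
    have h3 : (2 * k + 3) * (2 * k + 3) ≤ q * q := Nat.mul_le_mul h2 h2
    have e1 : (2 * k + 3) * (2 * k + 3) = 4 * (k * k) + 12 * k + 9 := by ring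
    have e2 : (k + 1) * k = k * k + k := by ring
    have e3 : q ^ 2 = q * q := by ring
    simp only [hk]
    simp only [Nat.add_sub_cancel, show k + 2 - 1 = k + 1 by omega]
    omega
  have hω0 : ((ω 0 : ℕ) : ℤ)
      = (q : ℤ) ^ 2 - (3 + 2 * ((N : ℤ) - 1) + ((N : ℤ) - 1) * ((N : ℤ) - 2)) := by
    rw [hωDel 0, W5, Nat.cast_sub hKle]
    push_cast [hNcast1, hNcast2]
    ring
  refine ⟨?_, ?_, ?_, ?_, ?_, ?_⟩
  · rw [hω0, hpn, ← hpm, hqN]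
    push_cast
    ring
  · rw [htt, hωDel (t * t), W3]
    have : ((((N : ℕ) - 1) * ((N : ℕ) - 2) : ℕ) : ℤ) = ((N : ℤ) - 1) * ((N : ℤ) - 2) := by
      push_cast [hNcast1, hNcast2]
      ring
    rw [this, show (2 : ℕ) * m = n by omega, hpn, ← hpm, hqN]
    push_cast
    ring
  · rw [htts, hωDel (t * t - t), W4]
    have : (((2 : ℕ) * ((N : ℕ) - 1) : ℕ) : ℤ) = 2 * ((N : ℤ) - 1) := by
      push_cast [hNcast1]
      ring
    rw [this, ← hpm, hqN]
    push_cast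
    ring
  · rw [hωDel 1, W1]
  · rw [hωDel _, W2]
  · intro i hi0 hit2 hit2t hi1 hibig
    rw [hωDel i]
    exact W6 i hi0 hi1 (htts ▸ hit2t) (htt ▸ hit2) hibig
end

section
/- Let n = 2m, d = s(2^m − 1) with gcd(s, 2^m + 1) = t, (2^m + 1)/t > 3, and 3t ∤ 2^m + 1. Then the system x^d + y^d = 1 and (x+1)^d + (y+1)^d = 1 has exactly 2 solutions (x,y) ∈ F_{2^n}^2, namely (0,1) and (1,0). -/
theorem stmt_14 (m n s t d : ℕ) (hm : 0 < m) (hn : n = 2 * m) (hs : 0 < s)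
    (ht : t = Nat.gcd s (2 ^ m + 1)) (hbig : (2 ^ m + 1) / t > 3)
    (h3t : ¬ (3 * t ∣ 2 ^ m + 1))
    (hd : d = s * (2 ^ m - 1))
    (F : Type) [Field F] [Fintype F] [DecidableEq F] (hF : Fintype.card F = 2 ^ n) :
    (Finset.univ.filter fun xy : F × F =>
      xy.1 ^ d + xy.2 ^ d = 1 ∧ (xy.1 + 1) ^ d + (xy.2 + 1) ^ d = 1) =
      {((0 : F), (1 : F)), ((1 : F), (0 : F))} ∧
    (Finset.univ.filter fun xy : F × F =>
      xy.1 ^ d + xy.2 ^ d = 1 ∧ (xy.1 + 1) ^ d + (xy.2 + 1) ^ d = 1).card = 2 := by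
  set q := 2 ^ m with hq
  have hq2 : 2 ≤ q := by
    calc 2 = 2 ^ 1 := rfl
    _ ≤ q := Nat.pow_le_pow_right (by norm_num) hm
  have hcard : Fintype.card F = q ^ 2 := by
    rw [hF, hn, hq, ← pow_mul, Nat.mul_comm]
  -- characteristic 2
  have h2 : (2 : F) = 0 := by
    have h0 : ((Fintype.card F : ℕ) : F) = 0 := FiniteField.cast_card_eq_zero F
    rw [hF] at h0
    push_cast at h0
    exact pow_eq_zero_iff (by omega) |>.mp h0
  haveI : CharP F 2 := (CharP.charP_iff_prime_eq_zero Nat.prime_two).mpr h2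
  haveI : Fact (Nat.Prime 2) := ⟨Nat.prime_two⟩
  -- basic positivity
  have hd0 : d ≠ 0 := by
    rw [hd]
    have : 1 ≤ q - 1 := by omega
    positivity
  -- q^2 - 1 = (q-1)*(q+1)
  have hq21 : (q - 1) * (q + 1) = q ^ 2 - 1 := by
    obtain ⟨j, hj⟩ := Nat.exists_eq_add_of_le hq2
    have e0 : 2 + j - 1 = 1 + j := by omega
    rw [hj, e0]
    have e1 : (2 + j) ^ 2 = (1 + j) * (2 + j + 1) + 1 := by ring
    rw [e1, Nat.add_sub_cancel]
  -- divisibility facts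
  have hts : t ∣ s := ht ▸ Nat.gcd_dvd_left s (q + 1)
  have htq : t ∣ q + 1 := ht ▸ Nat.gcd_dvd_right s (q + 1)
  set r := (q + 1) / t with hr
  have htr : t * r = q + 1 := Nat.mul_div_cancel' htq
  have hr3 : ¬ (3 ∣ r) := by
    rintro ⟨u, hu⟩
    exact h3t ⟨u, by rw [← htr, hu]; ring⟩
  -- powers of x^d for x ≠ 0
  have hU : ∀ x : F, x ≠ 0 → (x ^ d) ^ (q + 1) = 1 := by
    intro x hx
    have hx1 : x ^ (q ^ 2 - 1) = 1 := by
      have := FiniteField.pow_card_sub_one_eq_one x hx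
      rwa [hcard] at this
    rw [← pow_mul]
    have : d * (q + 1) = (q ^ 2 - 1) * s := by
      rw [hd, ← hq21]; ring
    rw [this, pow_mul, hx1, one_pow]
  have hV : ∀ x : F, x ≠ 0 → (x ^ d) ^ r = 1 := by
    intro x hx
    have hx1 : x ^ (q ^ 2 - 1) = 1 := by
      have := FiniteField.pow_card_sub_one_eq_one x hx
      rwa [hcard] at this
    obtain ⟨s', hs'⟩ := hts
    rw [← pow_mul]
    have : d * r = (q ^ 2 - 1) * s' := by
      rw [hd, hs', ← hq21]
      calc t * s' * (q - 1) * r = (q - 1) * (t * r) * s' := by ring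
      _ = (q - 1) * (q + 1) * s' := by rw [htr]
    rw [this, pow_mul, hx1, one_pow]
  -- key: no a b with a+b=1, both (q+1)-th roots of unity, a an r-th root
  have key : ∀ a b : F, a ^ (q + 1) = 1 → b ^ (q + 1) = 1 → a ^ r = 1 → a + b = 1 → False := by
    intro a b ha hb har hab
    have ha0 : a ≠ 0 := fun h => by simp [h, zero_pow, Nat.add_one_ne_zero] at ha
    have hb0 : b ≠ 0 := fun h => by simp [h, zero_pow, Nat.add_one_ne_zero] at hb
    have haq : a ^ q = a⁻¹ := by
      have : a ^ q * a = 1 := by rw [← pow_succ]; exact ha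
      exact eq_inv_of_mul_eq_one_left this
    have hbq : b ^ q = b⁻¹ := by
      have : b ^ q * b = 1 := by rw [← pow_succ]; exact hb
      exact eq_inv_of_mul_eq_one_left this
    have hfr : a⁻¹ + b⁻¹ = 1 := by
      have : (a + b) ^ q = a ^ q + b ^ q := by
        rw [hq]; exact add_pow_char_pow a b 2 m
      rw [hab, one_pow, haq, hbq] at this
      exact this.symm
    have hab1 : a * b = 1 := by
      field_simp at hfr
      rw [add_comm] at hfr
      rw [← hab, hfr]
    have hbinv : b = a⁻¹ := eq_inv_of_mul_eq_one_left (by rw [mul_comm]; exact hab1)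
    have heq : a ^ 2 + 1 = a := by
      have : a + a⁻¹ = 1 := hbinv ▸ hab
      field_simp at this
      linear_combination this
    have ha3 : a ^ 3 = 1 := by linear_combination (a + 1) * heq - h2
    have hane : a ≠ 1 := by
      intro h
      rw [h] at heq
      have : (1 : F) = 0 := by linear_combination heq
      exact one_ne_zero this
    have o3 : orderOf a ∣ 3 := orderOf_dvd_of_pow_eq_one ha3
    have orr : orderOf a ∣ r := orderOf_dvd_of_pow_eq_one har
    have cop : Nat.Coprime 3 r := (Nat.Prime.coprime_iff_not_dvd Nat.prime_three).mpr hr3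
    have h1 : orderOf a ∣ 1 := by
      have := Nat.dvd_gcd o3 orr
      rwa [Nat.Coprime.gcd_eq_one cop] at this
    exact hane (orderOf_eq_one_iff.mp (Nat.eq_one_of_dvd_one h1))
  have honene : ((0 : F), (1 : F)) ≠ ((1 : F), (0 : F)) :=
    fun h => zero_ne_one (congrArg Prod.fst h)
  have hset : (Finset.univ.filter fun xy : F × F =>
      xy.1 ^ d + xy.2 ^ d = 1 ∧ (xy.1 + 1) ^ d + (xy.2 + 1) ^ d = 1) =
      {((0 : F), (1 : F)), ((1 : F), (0 : F))} := by
    ext ⟨x, y⟩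
    simp only [Finset.mem_filter, Finset.mem_univ, true_and, Finset.mem_insert,
      Finset.mem_singleton, Prod.mk.injEq]
    constructor
    · rintro ⟨h1, hh2⟩
      by_cases hx : x = 0
      · left
        refine ⟨hx, ?_⟩
        subst hx
        rw [zero_add, one_pow] at hh2
        have : (y + 1) ^ d = 0 := by linear_combination hh2
        have hy1 : y + 1 = 0 := pow_eq_zero_iff hd0 |>.mp this
        linear_combination hy1 - h2
      · by_cases hy : y = 0
        · right
          refine ⟨?_, hy⟩
          subst hy
          rw [zero_add, one_pow] at hh2
          have : (x + 1) ^ d = 0 := by linear_combination hh2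
          have hx1 : x + 1 = 0 := pow_eq_zero_iff hd0 |>.mp this
          linear_combination hx1 - h2
        · exact absurd h1 (fun h1 => key _ _ (hU x hx) (hU y hy) (hV x hx) h1)
    · rintro (⟨rfl, rfl⟩ | ⟨rfl, rfl⟩)
      · have e : (1 : F) + 1 = 0 := by linear_combination h2
        constructor
        · rw [zero_pow hd0, one_pow, zero_add]
        · rw [zero_add, one_pow, e, zero_pow hd0, add_zero]
      · have e : (1 : F) + 1 = 0 := by linear_combination h2
        constructor
        · rw [zero_pow hd0, one_pow, add_zero]
        · rw [zero_add, one_pow, e, zero_pow hd0, zero_add]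
  refine ⟨hset, ?_⟩
  rw [hset]
  rw [Finset.card_insert_of_notMem (by simp [honene]), Finset.card_singleton]
end
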